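/- arXiv:0807.1201 — 5 statements merged into one kernel-verified Lean document; each statement's English description precedes it below -/
import Mathlib

section
/- Let X_1,...,X_m be i.i.d. real random variables with common distribution p, and let ν_m = (1/m)∑ δ_{X_i} be the empirical measure. Then E[∫_ℝ |F_p(t) - F_{ν_m}(t)| dt] ≤ (1/√m) ∫_ℝ sqrt(F_p(t)(1-F_p(t))) dt, where F_q denotes the cumulative distribution function of q. -/
open MeasureTheory ProbabilityTheory Real

/-!
For fixed `t`, `m F_{ν_m}(t)` is a sum of `m` independent Bernoulli(`F_p(t)`) indicators, so
`F_{ν_m}(t)` has mean `F_p(t)` and variance `F_p(t)(1 - F_p(t))/m`; Cauchy–Schwarz bounds the mean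
absolute deviation by the standard deviation. Integrating this bound in `t` and exchanging the
`ω`- and `t`-integrals (Tonelli, the integrand being nonnegative) gives the theorem.
-/

/-- No integrability on the product is needed: Tonelli applies to the nonnegative integrand. -/
lemma integral_integral_le_integral_of_forall_integral_le {α β : Type*} [MeasurableSpace α]
    [MeasurableSpace β] {μ : Measure α} [SFinite μ] {ν : Measure β} [SFinite ν]
    {G : α → β → ℝ} (hG : Measurable (Function.uncurry G)) (hG_nonneg : ∀ a b, 0 ≤ G a b)
    (hG_int : ∀ b, Integrable (G · b) μ) {B : β → ℝ} (hB : Integrable B ν)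
    (hGB : ∀ b, ∫ a, G a b ∂μ ≤ B b) :
    ∫ a, ∫ b, G a b ∂ν ∂μ ≤ ∫ b, B b ∂ν := by
  have hB_nonneg : ∀ b, 0 ≤ B b := fun b =>
    (integral_nonneg fun a => hG_nonneg a b).trans (hGB b)
  have hG' : Measurable fun p : α × β => ENNReal.ofReal (G p.1 p.2) := hG.ennreal_ofReal
  have hinner : ∀ a, ∫ b, G a b ∂ν = (∫⁻ b, ENNReal.ofReal (G a b) ∂ν).toReal := fun a =>
    integral_eq_lintegral_of_nonneg_ae (ae_of_all _ (hG_nonneg a))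
      (hG.comp measurable_prodMk_left).aestronglyMeasurable
  simp_rw [hinner]
  rw [integral_eq_lintegral_of_nonneg_ae (ae_of_all _ fun a => ENNReal.toReal_nonneg)
      (hG'.lintegral_prod_right'.ennreal_toReal.aestronglyMeasurable),
    integral_eq_lintegral_of_nonneg_ae (ae_of_all _ hB_nonneg) hB.aestronglyMeasurable]
  refine ENNReal.toReal_mono hB.lintegral_lt_top.ne ?_
  calc ∫⁻ a, ENNReal.ofReal (∫⁻ b, ENNReal.ofReal (G a b) ∂ν).toReal ∂μ
      ≤ ∫⁻ a, ∫⁻ b, ENNReal.ofReal (G a b) ∂ν ∂μ :=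
        lintegral_mono fun a => ENNReal.ofReal_toReal_le
    _ = ∫⁻ b, ∫⁻ a, ENNReal.ofReal (G a b) ∂μ ∂ν := lintegral_lintegral_swap hG'.aemeasurable
    _ = ∫⁻ b, ENNReal.ofReal (∫ a, G a b ∂μ) ∂ν := by
        refine lintegral_congr fun b => ?_
        exact (ofReal_integral_eq_lintegral_ofReal (hG_int b)
          (ae_of_all _ fun a => hG_nonneg a b)).symm
    _ ≤ ∫⁻ b, ENNReal.ofReal (B b) ∂ν := lintegral_mono fun b => ENNReal.ofReal_le_ofReal (hGB b)

section Moments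

variable {Ω : Type*} [MeasurableSpace Ω] {μ : Measure Ω}

section Average

variable {m : ℕ} {Y : Fin m → Ω → ℝ}

lemma integral_average {a : ℝ} (hm : 0 < m) (hY : ∀ i, Integrable (Y i) μ)
    (hmean : ∀ i, μ[Y i] = a) :
    ∫ ω, (1 / m : ℝ) * ∑ i, Y i ω ∂μ = a := by
  rw [integral_const_mul, integral_finsetSum _ fun i _ => hY i]
  simp only [hmean, Finset.sum_const, Finset.card_univ, Fintype.card_fin, nsmul_eq_mul]
  field_simp

lemma variance_average_of_iIndepFun {v : ℝ} (hY : ∀ i, MemLp (Y i) 2 μ)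
    (hindep : iIndepFun Y μ) (hvar : ∀ i, variance (Y i) μ = v) :
    variance (fun ω => (1 / m : ℝ) * ∑ i, Y i ω) μ = v / m := by
  have hsum : variance (∑ i, Y i) μ = m * v := by
    rw [IndepFun.variance_sum (fun i _ => hY i) fun i _ j _ hij => hindep.indepFun hij]
    simp [hvar]
  have := variance_const_mul (1 / m : ℝ) (∑ i, Y i) μ
  simp only [Finset.sum_apply] at this
  rw [this, hsum]
  rcases Nat.eq_zero_or_pos m with rfl | hm
  · simp
  · field_simp

end Average

variable [IsProbabilityMeasure μ]

lemma integral_abs_le_sqrt_integral_sq {Z : Ω → ℝ} (hZ : MemLp Z 2 μ) :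
    ∫ ω, |Z ω| ∂μ ≤ √(∫ ω, Z ω ^ 2 ∂μ) := by
  have hvar := variance_nonneg |Z| μ
  rw [variance_eq_sub hZ.abs] at hvar
  refine Real.le_sqrt_of_sq_le ?_
  simpa [Pi.pow_apply, sq_abs] using hvar

lemma integral_abs_sub_integral_le_sqrt_variance {Z : Ω → ℝ} (hZ : MemLp Z 2 μ) :
    ∫ ω, |Z ω - μ[Z]| ∂μ ≤ √(variance Z μ) := by
  rw [variance_eq_integral hZ.aemeasurable]
  exact integral_abs_le_sqrt_integral_sq (hZ.sub (memLp_const _))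

lemma variance_indicator_one {s : Set Ω} (hs : MeasurableSet s) :
    variance (s.indicator 1) μ = μ.real s * (1 - μ.real s) := by
  have hL2 : MemLp (s.indicator (1 : Ω → ℝ)) 2 μ := (memLp_const 1).indicator hs
  have hsq : s.indicator (1 : Ω → ℝ) ^ 2 = s.indicator 1 := by
    ext ω; by_cases h : ω ∈ s <;> simp [h]
  rw [variance_eq_sub hL2, hsq, integral_indicator_one hs]
  ring

end Moments

noncomputable def empiricalCDF {m : ℕ} (x : Fin m → ℝ) (t : ℝ) : ℝ :=
  (1 / m : ℝ) * ∑ i, if x i ≤ t then 1 else 0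

lemma empiricalCDF_eq_average_indicator {Ω : Type*} {m : ℕ} (X : Fin m → Ω → ℝ) (t : ℝ) :
    (fun ω => empiricalCDF (X · ω) t) =
      fun ω => (1 / m : ℝ) * ∑ i, (X i ⁻¹' Set.Iic t).indicator 1 ω := by
  simp only [empiricalCDF, Set.indicator, Set.mem_preimage, Set.mem_Iic, Pi.one_apply]

section Sample

variable {Ω : Type*} [MeasurableSpace Ω] {μ : Measure Ω} {p : Measure ℝ} [IsProbabilityMeasure p]
  {m : ℕ} {X : Fin m → Ω → ℝ}

lemma measureReal_preimage_Iic_eq_cdf {Y : Ω → ℝ} (hY : Measurable Y) (hlaw : μ.map Y = p)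
    (t : ℝ) : μ.real (Y ⁻¹' Set.Iic t) = cdf p t := by
  rw [cdf_eq_real, ← hlaw, map_measureReal_apply hY measurableSet_Iic]

lemma measurable_empiricalCDF_uncurry (hX : ∀ i, Measurable (X i)) :
    Measurable fun q : Ω × ℝ => empiricalCDF (X · q.1) q.2 := by
  refine measurable_const.mul (Finset.measurable_sum _ fun i _ => ?_)
  exact Measurable.ite (measurableSet_le ((hX i).comp measurable_fst) measurable_snd)
    measurable_const measurable_const

variable [IsProbabilityMeasure μ]

lemma memLp_empiricalCDF (hX : ∀ i, Measurable (X i)) (t : ℝ) :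
    MemLp (fun ω => empiricalCDF (X · ω) t) 2 μ := by
  rw [empiricalCDF_eq_average_indicator]
  refine MemLp.const_mul ?_ _
  exact memLp_finsetSum _ fun i _ => (memLp_const 1).indicator (hX i measurableSet_Iic)

lemma integral_empiricalCDF (hm : 0 < m) (hX : ∀ i, Measurable (X i))
    (hlaw : ∀ i, μ.map (X i) = p) (t : ℝ) :
    ∫ ω, empiricalCDF (X · ω) t ∂μ = cdf p t := by
  rw [empiricalCDF_eq_average_indicator]
  refine integral_average hm (fun i => (integrable_const 1).indicator (hX i measurableSet_Iic))
    fun i => ?_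
  rw [integral_indicator_one (hX i measurableSet_Iic),
    measureReal_preimage_Iic_eq_cdf (hX i) (hlaw i)]

lemma variance_empiricalCDF (hX : ∀ i, Measurable (X i)) (hlaw : ∀ i, μ.map (X i) = p)
    (hindep : iIndepFun X μ) (t : ℝ) :
    variance (fun ω => empiricalCDF (X · ω) t) μ = cdf p t * (1 - cdf p t) / m := by
  rw [empiricalCDF_eq_average_indicator]
  refine variance_average_of_iIndepFun
    (fun i => (memLp_const 1).indicator (hX i measurableSet_Iic))
    (hindep.comp _ fun _ => measurable_one.indicator measurableSet_Iic) fun i => ?_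
  rw [variance_indicator_one (hX i measurableSet_Iic),
    measureReal_preimage_Iic_eq_cdf (hX i) (hlaw i)]

lemma integral_abs_cdf_sub_empiricalCDF_le (hm : 0 < m) (hX : ∀ i, Measurable (X i))
    (hlaw : ∀ i, μ.map (X i) = p) (hindep : iIndepFun X μ) (t : ℝ) :
    ∫ ω, |cdf p t - empiricalCDF (X · ω) t| ∂μ ≤ √(cdf p t * (1 - cdf p t)) / √m := by
  have h := integral_abs_sub_integral_le_sqrt_variance (memLp_empiricalCDF (μ := μ) hX t)
  simp_rw [abs_sub_comm (cdf p t)]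
  rwa [integral_empiricalCDF hm hX hlaw, variance_empiricalCDF hX hlaw hindep,
    sqrt_div' _ (Nat.cast_nonneg m)] at h

end Sample

/-- If `X₁,...,X_m` are i.i.d. with law `p` and `ν_m` is the empirical measure, then
`E ∫ |F_p(t) - F_{ν_m}(t)| dt ≤ (1/√m) ∫ sqrt(F_p(t)(1-F_p(t))) dt`. -/
theorem stmt2 {Ω : Type*} [MeasurableSpace Ω] (μ : Measure Ω) [IsProbabilityMeasure μ]
    (p : Measure ℝ) [IsProbabilityMeasure p] (m : ℕ) (hm : 0 < m)
    (X : Fin m → Ω → ℝ) (hX : ∀ i, Measurable (X i))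
    (hlaw : ∀ i, Measure.map (X i) μ = p)
    (hindep : iIndepFun X μ)
    (hΔ : Integrable (fun t =>
      Real.sqrt ((p (Set.Iic t)).toReal * (1 - (p (Set.Iic t)).toReal)))) :
    ∫ ω, (∫ t, |(p (Set.Iic t)).toReal -
        (1 / m : ℝ) * ∑ i, (if X i ω ≤ t then (1 : ℝ) else 0)|) ∂μ ≤
      (1 / Real.sqrt m) *
        ∫ t, Real.sqrt ((p (Set.Iic t)).toReal * (1 - (p (Set.Iic t)).toReal)) := by
  have hcdf : ∀ t, (p (Set.Iic t)).toReal = cdf p t := fun t => by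
    rw [cdf_eq_real, measureReal_def]
  simp only [hcdf] at hΔ ⊢
  change ∫ ω, (∫ t, |cdf p t - empiricalCDF (X · ω) t|) ∂μ ≤ _
  have hmeas : Measurable fun q : Ω × ℝ => |cdf p q.2 - empiricalCDF (X · q.1) q.2| :=
    (((cdf p).mono.measurable.comp measurable_snd).sub (measurable_empiricalCDF_uncurry hX)).abs
  rw [one_div_mul_eq_div, ← integral_div]
  exact integral_integral_le_integral_of_forall_integral_le hmeas (fun _ _ => abs_nonneg _)
    (fun t => ((memLp_const _).sub (memLp_empiricalCDF hX t)).integrable one_le_two |>.abs)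
    (hΔ.div_const _) (integral_abs_cdf_sub_empiricalCDF_le hm hX hlaw hindep)
end

section
/- For any Borel probability measure p on ℝ with finite moment of order 2+δ for some δ > 0, one has ∫_ℝ sqrt(F_p(t)(1-F_p(t))) dt ≤ 1 + sqrt(2(1+δ)/δ) · (∫_ℝ |x|^{2+δ} p(dx))^{1/2}. -/
/-!
Since `F (1 - F) ≤ min (F, 1 - F)`, the integrand at `t` is at most
`min (1/2, P(|X| ≥ |t|)^{1/2})`. Folding the line onto `(0, ∞)`, the part `(0, 1]` contributes
at most `1`. On `(1, ∞)` write `P(|X| ≥ t)^{1/2} = t^{-(1+δ)/2} · (t^{1+δ} P(|X| ≥ t))^{1/2}` and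
apply Cauchy–Schwarz: `∫₁^∞ t^{-(1+δ)} dt = 1/δ`, while by the layer cake formula
`∫₀^∞ t^{1+δ} P(|X| ≥ t) dt = E|X|^{2+δ} / (2+δ)`. This gives the bound
`1 + 2 (E|X|^{2+δ} / (δ (2+δ)))^{1/2}`, which is at most the claimed one.
-/

open MeasureTheory Set
open scoped ENNReal

lemma lintegral_comp_abs (f : ℝ → ℝ≥0∞) : ∫⁻ x, f |x| = 2 * ∫⁻ x in Ioi 0, f x := by
  have hpos : ∫⁻ x in Ioi 0, f |x| = ∫⁻ x in Ioi 0, f x :=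
    setLIntegral_congr_fun measurableSet_Ioi fun x hx => by rw [abs_of_pos hx]
  have hneg : ∫⁻ x in Iio 0, f |x| = ∫⁻ x in Ioi 0, f |x| := by
    have := (Measure.measurePreserving_neg (volume : Measure ℝ)).setLIntegral_comp_preimage_emb
      (Homeomorph.neg ℝ).measurableEmbedding (fun x => f |x|) (Ioi 0)
    simpa using this
  rw [← lintegral_add_compl _ measurableSet_Ici, compl_Ici, hneg,
    setLIntegral_congr Ioi_ae_eq_Ici.symm, hpos, two_mul]

lemma lintegral_min_comp_abs_le (c : ℝ≥0∞) (h : ℝ → ℝ≥0∞) :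
    ∫⁻ t, min c (h |t|) ≤ 2 * c + 2 * ∫⁻ t in Ioi 1, h t := by
  rw [lintegral_comp_abs (fun s => min c (h s)), ← Ioc_union_Ioi_eq_Ioi zero_le_one,
    lintegral_union measurableSet_Ioi Ioc_disjoint_Ioi_same, mul_add]
  gcongr
  · calc ∫⁻ t in Ioc 0 1, min c (h t) ≤ ∫⁻ _ in Ioc (0 : ℝ) 1, c :=
          lintegral_mono fun _ => min_le_left _ _
      _ = c := by simp
  · exact min_le_right _ _

lemma measureReal_Iic_mul_one_sub_le (μ : Measure ℝ) [IsProbabilityMeasure μ] (t : ℝ) :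
    μ.real (Iic t) * (1 - μ.real (Iic t)) ≤ μ.real {x | |t| ≤ |x|} := by
  rw [← probReal_compl_eq_one_sub measurableSet_Iic, compl_Iic]
  rcases le_total 0 t with ht | ht
  · calc _ ≤ μ.real (Ioi t) := mul_le_of_le_one_left measureReal_nonneg measureReal_le_one
      _ ≤ _ := measureReal_mono fun x (hx : t < x) => show |t| ≤ |x| by
          rw [abs_of_nonneg ht, abs_of_pos (ht.trans_lt hx)]; exact hx.le
  · calc _ ≤ μ.real (Iic t) := mul_le_of_le_one_right measureReal_nonneg measureReal_le_one
      _ ≤ _ := measureReal_mono fun x (hx : x ≤ t) => show |t| ≤ |x| by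
          rw [abs_of_nonpos ht, abs_of_nonpos (hx.trans ht)]; linarith

lemma ofReal_sqrt_cdf_mul_one_sub_le (μ : Measure ℝ) [IsProbabilityMeasure μ] (t : ℝ) :
    ENNReal.ofReal √(μ.real (Iic t) * (1 - μ.real (Iic t))) ≤
      min 2⁻¹ (μ {x | |t| ≤ |x|} ^ (1 / 2 : ℝ)) := by
  refine le_min ?_ ?_
  · rw [← ENNReal.ofReal_ofNat 2, ← ENNReal.ofReal_inv_of_pos two_pos]
    refine ENNReal.ofReal_le_ofReal (Real.sqrt_le_iff.2 ⟨by norm_num, ?_⟩)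
    nlinarith [sq_nonneg (2 * μ.real (Iic t) - 1)]
  · rw [← ofReal_measureReal, ENNReal.ofReal_rpow_of_nonneg measureReal_nonneg (by norm_num),
      ← Real.sqrt_eq_rpow]
    exact ENNReal.ofReal_le_ofReal (Real.sqrt_le_sqrt (measureReal_Iic_mul_one_sub_le μ t))

lemma lintegral_rpow_half_le_weighted {α : Type*} [MeasurableSpace α] (μ : Measure α)
    {w g : α → ℝ≥0∞} (hw : AEMeasurable w μ) (hg : AEMeasurable g μ) (hw0 : ∀ᵐ x ∂μ, w x ≠ 0)
    (hwt : ∀ᵐ x ∂μ, w x ≠ ∞) :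
    ∫⁻ x, g x ^ (1 / 2 : ℝ) ∂μ ≤
      (∫⁻ x, (w x)⁻¹ ∂μ) ^ (1 / 2 : ℝ) * (∫⁻ x, w x * g x ∂μ) ^ (1 / 2 : ℝ) := by
  have hsplit : (fun x => g x ^ (1 / 2 : ℝ)) =ᵐ[μ]
      (fun x => (w x)⁻¹ ^ (1 / 2 : ℝ)) * fun x => (w x * g x) ^ (1 / 2 : ℝ) := by
    filter_upwards [hw0, hwt] with x h0 ht
    rw [Pi.mul_apply, ← ENNReal.mul_rpow_of_nonneg _ _ (by norm_num),
      ENNReal.inv_mul_cancel_left h0 ht]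
  have hpow (f : α → ℝ≥0∞) : ∫⁻ x, (f x ^ (1 / 2 : ℝ)) ^ (2 : ℝ) ∂μ = ∫⁻ x, f x ∂μ := by
    simp_rw [← ENNReal.rpow_mul]; norm_num
  calc ∫⁻ x, g x ^ (1 / 2 : ℝ) ∂μ = _ := lintegral_congr_ae hsplit
    _ ≤ _ := ENNReal.lintegral_mul_le_Lp_mul_Lq μ .two_two
          (hw.inv.pow_const _) ((hw.mul hg).pow_const _)
    _ = _ := by rw [hpow, hpow]

lemma lintegral_Ioi_one_inv_rpow {δ : ℝ} (hδ : 0 < δ) :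
    ∫⁻ t in Ioi (1 : ℝ), (ENNReal.ofReal (t ^ (1 + δ)))⁻¹ = ENNReal.ofReal δ⁻¹ := by
  have hint : IntegrableOn (fun t : ℝ => t ^ (-(1 + δ))) (Ioi 1) :=
    integrableOn_Ioi_rpow_of_lt (by linarith) one_pos
  calc ∫⁻ t in Ioi (1 : ℝ), (ENNReal.ofReal (t ^ (1 + δ)))⁻¹
        = ∫⁻ t in Ioi (1 : ℝ), ENNReal.ofReal (t ^ (-(1 + δ))) :=
          setLIntegral_congr_fun measurableSet_Ioi fun t (ht : 1 < t) => by
            have ht0 : 0 < t := one_pos.trans ht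
            rw [Real.rpow_neg ht0.le, ENNReal.ofReal_inv_of_pos (by positivity)]
    _ = ENNReal.ofReal (∫ t in Ioi (1 : ℝ), t ^ (-(1 + δ))) :=
          (ofReal_integral_eq_lintegral_ofReal hint
            ((ae_restrict_iff' measurableSet_Ioi).2 (.of_forall fun t (ht : 1 < t) =>
              Real.rpow_nonneg (one_pos.trans ht).le _))).symm
    _ = ENNReal.ofReal δ⁻¹ := by
          rw [integral_Ioi_rpow_of_lt (by linarith) one_pos, Real.one_rpow]
          congr 1
          rw [show -(1 + δ) + 1 = -δ by ring, div_neg, neg_div, neg_neg, one_div]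

lemma lintegral_Ioi_rpow_mul_meas_le_abs (μ : Measure ℝ) {q : ℝ} (hq : 0 < q) :
    ∫⁻ t in Ioi 0, ENNReal.ofReal (t ^ (q - 1)) * μ {x | t ≤ |x|} =
      (ENNReal.ofReal q)⁻¹ * ∫⁻ x, ENNReal.ofReal (|x| ^ q) ∂μ := by
  rw [lintegral_rpow_eq_lintegral_meas_le_mul μ (.of_forall fun x => abs_nonneg x)
    continuous_abs.aemeasurable hq, ENNReal.inv_mul_cancel_left
    (by simpa using hq) ENNReal.ofReal_ne_top]
  simp_rw [mul_comm]

lemma lintegral_Ioi_one_rpow_half_meas_le_abs (μ : Measure ℝ) {δ : ℝ} (hδ : 0 < δ) :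
    ∫⁻ t in Ioi 1, μ {x | t ≤ |x|} ^ (1 / 2 : ℝ) ≤
      ((∫⁻ x, ENNReal.ofReal (|x| ^ (2 + δ)) ∂μ) / ENNReal.ofReal (δ * (2 + δ))) ^ (1 / 2 : ℝ) := by
  have htail : Measurable fun t : ℝ => μ {x | t ≤ |x|} :=
    Antitone.measurable fun s t hst => measure_mono fun x hx => hst.trans hx
  have hweight : ∀ᵐ t ∂volume.restrict (Ioi (1 : ℝ)), ENNReal.ofReal (t ^ (1 + δ)) ≠ 0 :=
    (ae_restrict_iff' measurableSet_Ioi).2 (.of_forall fun t (ht : 1 < t) => by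
      simpa using Real.rpow_pos_of_pos (one_pos.trans ht) _)
  have hmoment : ∫⁻ t in Ioi 1, ENNReal.ofReal (t ^ (1 + δ)) * μ {x | t ≤ |x|} ≤
      (ENNReal.ofReal (2 + δ))⁻¹ * ∫⁻ x, ENNReal.ofReal (|x| ^ (2 + δ)) ∂μ := by
    rw [← lintegral_Ioi_rpow_mul_meas_le_abs μ (by positivity), show 2 + δ - 1 = 1 + δ by ring]
    exact lintegral_mono_set (Ioi_subset_Ioi zero_le_one)
  calc ∫⁻ t in Ioi 1, μ {x | t ≤ |x|} ^ (1 / 2 : ℝ)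
      ≤ (∫⁻ t in Ioi 1, (ENNReal.ofReal (t ^ (1 + δ)))⁻¹) ^ (1 / 2 : ℝ) *
          (∫⁻ t in Ioi 1, ENNReal.ofReal (t ^ (1 + δ)) * μ {x | t ≤ |x|}) ^ (1 / 2 : ℝ) :=
        lintegral_rpow_half_le_weighted _ (by fun_prop) htail.aemeasurable hweight
          (.of_forall fun _ => ENNReal.ofReal_ne_top)
    _ ≤ (ENNReal.ofReal δ⁻¹) ^ (1 / 2 : ℝ) *
          ((ENNReal.ofReal (2 + δ))⁻¹ * ∫⁻ x, ENNReal.ofReal (|x| ^ (2 + δ)) ∂μ) ^ (1 / 2 : ℝ) := by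
        rw [lintegral_Ioi_one_inv_rpow hδ]
        gcongr
    _ = _ := by
        rw [← ENNReal.mul_rpow_of_nonneg _ _ (by norm_num), ← mul_assoc, ENNReal.div_eq_inv_mul,
          ENNReal.ofReal_mul hδ.le, ENNReal.mul_inv (.inr ENNReal.ofReal_ne_top)
          (.inl ENNReal.ofReal_ne_top), ENNReal.ofReal_inv_of_pos hδ]

lemma lintegral_sqrt_cdf_mul_one_sub_le (μ : Measure ℝ) [IsProbabilityMeasure μ] {δ : ℝ}
    (hδ : 0 < δ) :
    ∫⁻ t, ENNReal.ofReal √(μ.real (Iic t) * (1 - μ.real (Iic t))) ≤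
      1 + 2 * ((∫⁻ x, ENNReal.ofReal (|x| ^ (2 + δ)) ∂μ) / ENNReal.ofReal (δ * (2 + δ))) ^
        (1 / 2 : ℝ) :=
  calc _ ≤ ∫⁻ t, min 2⁻¹ (μ {x | |t| ≤ |x|} ^ (1 / 2 : ℝ)) :=
        lintegral_mono (ofReal_sqrt_cdf_mul_one_sub_le μ)
    _ ≤ 2 * 2⁻¹ + 2 * ∫⁻ t in Ioi 1, μ {x | t ≤ |x|} ^ (1 / 2 : ℝ) :=
        lintegral_min_comp_abs_le _ fun s => μ {x | s ≤ |x|} ^ (1 / 2 : ℝ)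
    _ ≤ _ := by
        rw [ENNReal.mul_inv_cancel two_ne_zero ENNReal.ofNat_ne_top]
        grw [lintegral_Ioi_one_rpow_half_meas_le_abs μ hδ]

lemma two_mul_sqrt_div_le {δ M : ℝ} (hδ : 0 < δ) (hM : 0 ≤ M) :
    2 * √(M / (δ * (2 + δ))) ≤ √(2 * (1 + δ) / δ) * √M := by
  rw [← Real.sqrt_mul (by positivity), Real.le_sqrt (by positivity) (by positivity), mul_pow,
    Real.sq_sqrt (by positivity), div_mul_eq_mul_div, ← mul_div_assoc,
    div_le_div_iff₀ (by positivity) hδ]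
  nlinarith [mul_nonneg (mul_nonneg hM hδ.le) hδ.le, mul_nonneg hM hδ.le]

/-- For a Borel probability measure `p` on `ℝ` with finite moment of order `2+δ`,
`∫ sqrt(F_p(t)(1-F_p(t))) dt ≤ 1 + sqrt(2(1+δ)/δ) (∫ |x|^{2+δ} dp)^{1/2}`. -/
theorem stmt3 (p : Measure ℝ) [IsProbabilityMeasure p] (δ : ℝ) (hδ : 0 < δ)
    (hmom : Integrable (fun x => |x| ^ (2 + δ)) p) :
    ∫ t, Real.sqrt ((p (Set.Iic t)).toReal * (1 - (p (Set.Iic t)).toReal)) ≤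
      1 + Real.sqrt (2 * (1 + δ) / δ) * (∫ x, |x| ^ (2 + δ) ∂p) ^ (1 / 2 : ℝ) := by
  set M := ∫ x, |x| ^ (2 + δ) ∂p
  have hM : 0 ≤ M := integral_nonneg fun x => Real.rpow_nonneg (abs_nonneg x) _
  have hmoment : ∫⁻ x, ENNReal.ofReal (|x| ^ (2 + δ)) ∂p = ENNReal.ofReal M :=
    (ofReal_integral_eq_lintegral_ofReal hmom
      (.of_forall fun x => Real.rpow_nonneg (abs_nonneg x) _)).symm
  have hcdf : Measurable fun t => p.real (Iic t) :=
    Monotone.measurable fun s t hst => measureReal_mono (Iic_subset_Iic.2 hst)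
  change ∫ t, √(p.real (Iic t) * (1 - p.real (Iic t))) ≤ _
  rw [integral_eq_lintegral_of_nonneg_ae (.of_forall fun t => Real.sqrt_nonneg _)
    (by fun_prop), ← Real.sqrt_eq_rpow]
  refine ENNReal.toReal_le_of_le_ofReal (by positivity)
    ((lintegral_sqrt_cdf_mul_one_sub_le p hδ).trans ?_)
  rw [hmoment, ← ENNReal.ofReal_div_of_pos (by positivity),
    ENNReal.ofReal_rpow_of_nonneg (by positivity) (by norm_num), ← Real.sqrt_eq_rpow,
    ← ENNReal.ofReal_ofNat 2, ← ENNReal.ofReal_mul zero_le_two, ← ENNReal.ofReal_one,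
    ← ENNReal.ofReal_add zero_le_one (by positivity)]
  exact ENNReal.ofReal_le_ofReal (by linarith [two_mul_sqrt_div_le hδ hM])
end

section
/- Let (ξ_k) be an exchangeable sequence directed by a random probability measure p̃ on ℝ (i.e., conditionally i.i.d. with law p̃), and let f: ℝ → ℝ be measurable with E[f(ξ_1)^2] < ∞. Then the Wasserstein distance of order one between the law of (1/N)∑_{i=1}^N f(ξ_i) and the law of ∫ f dp̃ satisfies w_1((1/N)∑_{i=1}^N f(ξ_i), ∫ f dp̃) ≤ (1/√N)(E|f(ξ_1) - ∫ f dp̃|^2)^{1/2} ≤ (2/√N)·sqrt(E[f(ξ_1)^2]). -/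
/-!
Write `Y i = f (ξ i) - ∫ f dp̃` (`condCentered`). Conditioning on `p̃` is realised through the joint
law of `(p̃, ξ i)`, resp. `(p̃, ξ i, ξ j)` for `i ≠ j`: it is the law of `p̃` composed with the kernel
`q ↦ q`, resp. `q ↦ q ⊗ q`, on probability measures. Hence the `Y i` are identically distributed
and, being conditionally independent and conditionally centred, orthogonal in `L²`, so that
`E ((1/N) ∑ Y i)² = E (Y 0)² / N`. Coupling the two laws through `ω` bounds `w₁` by
`E |(1/N) ∑ Y i|`, and Cauchy–Schwarz gives the first inequality. For the second,
`E[(Y 0)² | p̃]` is the variance of `f` under `p̃`, hence at most `∫ f² dp̃`.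
-/

open MeasureTheory ProbabilityTheory Real

/-- `ξ` is, conditionally on the random probability measure `p̃`, an i.i.d. sequence with
common law `p̃` (i.e. an exchangeable sequence directed by `p̃`). -/
def CondIID {Ω : Type*} [MeasurableSpace Ω] {X : Type*} [MeasurableSpace X]
    (μ : Measure Ω) (ξ : ℕ → Ω → X) (ptilde : Ω → Measure X) : Prop :=
  (∀ ω, IsProbabilityMeasure (ptilde ω)) ∧ Measurable ptilde ∧ (∀ i, Measurable (ξ i)) ∧
  ∀ (n : ℕ) (A : Fin n → Set X) (B : Set (Measure X)),
    (∀ i, MeasurableSet (A i)) → MeasurableSet B →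
    μ ({ω | ∀ i, ξ (i : ℕ) ω ∈ A i} ∩ ptilde ⁻¹' B) =
      ∫⁻ ω in ptilde ⁻¹' B, ∏ i, ptilde ω (A i) ∂μ

/-- Wasserstein distance of order one between laws on `ℝ`, as an infimum over couplings. -/
noncomputable def w1 (P Q : Measure ℝ) : ℝ :=
  sInf {x | ∃ γ : Measure (ℝ × ℝ), IsProbabilityMeasure γ ∧
    γ.map Prod.fst = P ∧ γ.map Prod.snd = Q ∧ x = ∫ z, |z.1 - z.2| ∂γ}

open scoped ENNReal

section Moments

variable {α : Type*} [MeasurableSpace α] {μ : Measure α}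

lemma integral_sub_integral_eq_zero [IsProbabilityMeasure μ] (f : α → ℝ) :
    ∫ x, (f x - ∫ y, f y ∂μ) ∂μ = 0 := by
  by_cases hf : Integrable f μ
  · rw [integral_sub hf (integrable_const _), integral_const, probReal_univ, one_smul, sub_self]
  · refine integral_undef fun hsub => hf ?_
    simpa [sub_eq_add_neg] using integrable_add_const_iff.1 hsub

lemma lintegral_enorm_sub_integral_sq_le [IsProbabilityMeasure μ] {f : α → ℝ}
    (hf : AEStronglyMeasurable f μ) :
    ∫⁻ x, ‖f x - ∫ y, f y ∂μ‖ₑ ^ 2 ∂μ ≤ ∫⁻ x, ‖f x‖ₑ ^ 2 ∂μ := by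
  by_cases hf2 : MemLp f 2 μ
  · have hvar := variance_le_expectation_sq hf
    simp only [Pi.pow_apply] at hvar
    rw [← ENNReal.ofReal_le_ofReal_iff (integral_nonneg fun _ => sq_nonneg _),
      ofReal_variance hf2, ofReal_integral_eq_lintegral_ofReal hf2.integrable_sq
        (.of_forall fun _ => sq_nonneg _)] at hvar
    simpa [evariance, ← ENNReal.ofReal_pow, Real.enorm_eq_ofReal_abs] using hvar
  · refine le_top.trans_eq (Eq.symm ?_)
    by_contra hfin
    refine hf2 ((memLp_two_iff_integrable_sq hf).2 ⟨hf.pow 2, ?_⟩)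
    simpa [HasFiniteIntegral, enorm_pow] using lt_top_iff_ne_top.2 hfin

lemma integral_sq_sum_of_orthogonal {ι : Type*} {Y : ι → α → ℝ} (hY : ∀ i, MemLp (Y i) 2 μ)
    (horth : ∀ i j, i ≠ j → ∫ a, Y i a * Y j a ∂μ = 0) {v : ℝ} (hv : ∀ i, ∫ a, Y i a ^ 2 ∂μ = v)
    (s : Finset ι) : ∫ a, (∑ i ∈ s, Y i a) ^ 2 ∂μ = s.card * v := by
  classical
  have hint : ∀ i j, Integrable (fun a => Y i a * Y j a) μ := fun i j =>
    (hY i).integrable_mul (hY j)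
  calc ∫ a, (∑ i ∈ s, Y i a) ^ 2 ∂μ = ∑ i ∈ s, ∑ j ∈ s, ∫ a, Y i a * Y j a ∂μ := by
        simp_rw [sq, Finset.sum_mul_sum]
        rw [integral_finsetSum _ fun i _ => integrable_finsetSum _ fun j _ => hint i j]
        exact Finset.sum_congr rfl fun i _ => integral_finsetSum _ fun j _ => hint i j
    _ = ∑ i ∈ s, v := Finset.sum_congr rfl fun i hi => by
        rw [Finset.sum_eq_single_of_mem i hi fun j _ hji => horth i j (Ne.symm hji), ← hv i]
        simp_rw [sq]
    _ = s.card * v := by rw [Finset.sum_const, nsmul_eq_mul]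

lemma integral_abs_le_sqrt_integral_sq_s10 [IsProbabilityMeasure μ] {u : α → ℝ} (hu : MemLp u 2 μ) :
    ∫ a, |u a| ∂μ ≤ √(∫ a, u a ^ 2 ∂μ) := by
  have hvar := variance_nonneg (fun a => |u a|) μ
  rw [variance_eq_sub (by simpa using hu.norm)] at hvar
  simp only [Pi.pow_apply, sq_abs, sub_nonneg] at hvar
  exact Real.le_sqrt_of_sq_le hvar

lemma integral_sq_le_of_lintegral_enorm_sq_le {u v : α → ℝ} (hu : AEStronglyMeasurable u μ)
    (hv : MemLp v 2 μ)
    (huv : ∫⁻ a, ‖u a‖ₑ ^ 2 ∂μ ≤ ∫⁻ a, ‖v a‖ₑ ^ 2 ∂μ) :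
    MemLp u 2 μ ∧ ∫ a, u a ^ 2 ∂μ ≤ ∫ a, v a ^ 2 ∂μ := by
  have hv_fin : ∫⁻ a, ‖v a‖ₑ ^ 2 ∂μ < ∞ := by
    simpa [HasFiniteIntegral, enorm_pow] using hv.integrable_sq.2
  have hsq (w : α → ℝ) (hw : AEStronglyMeasurable w μ) :
      ∫ a, w a ^ 2 ∂μ = (∫⁻ a, ‖w a‖ₑ ^ 2 ∂μ).toReal := by
    rw [integral_eq_lintegral_of_nonneg_ae (.of_forall fun _ => sq_nonneg _) (hw.pow 2)]
    simp [← ENNReal.ofReal_pow, Real.enorm_eq_ofReal_abs]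
  refine ⟨(memLp_two_iff_integrable_sq hu).2 ⟨hu.pow 2, ?_⟩, ?_⟩
  · simpa [HasFiniteIntegral, enorm_pow] using huv.trans_lt hv_fin
  · rw [hsq u hu, hsq v hv.1]
    exact ENNReal.toReal_mono hv_fin.ne huv

end Moments

lemma w1_map_le_integral_abs_sub {Ω : Type*} [MeasurableSpace Ω] {μ : Measure Ω}
    [IsProbabilityMeasure μ] {U V : Ω → ℝ} (hU : Measurable U) (hV : Measurable V) :
    w1 (μ.map U) (μ.map V) ≤ ∫ ω, |U ω - V ω| ∂μ := by
  have hUV : Measurable fun ω => (U ω, V ω) := hU.prodMk hV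
  refine csInf_le ⟨0, ?_⟩ ⟨μ.map fun ω => (U ω, V ω),
    Measure.isProbabilityMeasure_map hUV.aemeasurable,
    by rw [Measure.map_map measurable_fst hUV]; rfl,
    by rw [Measure.map_map measurable_snd hUV]; rfl,
    by rw [integral_map hUV.aemeasurable (by fun_prop)]⟩
  rintro _ ⟨γ, -, -, -, rfl⟩
  exact integral_nonneg fun _ => abs_nonneg _

namespace MeasureTheory.ProbabilityMeasure

variable {X : Type*} [MeasurableSpace X]

noncomputable def toKernel : Kernel (ProbabilityMeasure X) X := ⟨(↑), measurable_subtype_coe⟩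

@[simp] lemma toKernel_apply (q : ProbabilityMeasure X) : toKernel q = q := rfl

instance : IsMarkovKernel (toKernel : Kernel (ProbabilityMeasure X) X) :=
  ⟨fun q => by rw [toKernel_apply]; infer_instance⟩

lemma stronglyMeasurable_integral {E : Type*} [NormedAddCommGroup E] [NormedSpace ℝ E]
    {f : X → E} (hf : StronglyMeasurable f) :
    StronglyMeasurable fun q : ProbabilityMeasure X => ∫ x, f x ∂q :=
  StronglyMeasurable.integral_kernel_prod_right (κ := toKernel) (f := fun _ x => f x)
    (hf.comp_measurable measurable_snd)

lemma measurable_sub_integral {f : X → ℝ} (hf : Measurable f) :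
    Measurable fun z : ProbabilityMeasure X × X => f z.2 - ∫ x, f x ∂(z.1 : Measure X) :=
  (hf.comp measurable_snd).sub
    ((stronglyMeasurable_integral hf.stronglyMeasurable).measurable.comp measurable_fst)

end MeasureTheory.ProbabilityMeasure

noncomputable def condCentered {Ω X : Type*} [MeasurableSpace X] (ξ : ℕ → Ω → X)
    (ptilde : Ω → Measure X) (f : X → ℝ) (i : ℕ) (ω : Ω) : ℝ :=
  f (ξ i ω) - ∫ x, f x ∂ptilde ω

namespace CondIID

open ProbabilityMeasure

variable {Ω X : Type*} [MeasurableSpace Ω] [MeasurableSpace X] {μ : Measure Ω}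
  {ξ : ℕ → Ω → X} {ptilde : Ω → Measure X}

lemma measure_biInter_preimage_inter (h : CondIID μ ξ ptilde) (s : Finset ℕ) {A : ℕ → Set X}
    (hA : ∀ i, MeasurableSet (A i)) {B : Set (Measure X)} (hB : MeasurableSet B) :
    μ ((⋂ i ∈ s, ξ i ⁻¹' A i) ∩ ptilde ⁻¹' B) =
      ∫⁻ ω in ptilde ⁻¹' B, ∏ i ∈ s, ptilde ω (A i) ∂μ := by
  classical
  obtain ⟨n, hsn⟩ : ∃ n, s ⊆ Finset.range n := ⟨s.sup id + 1, fun i hi =>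
    Finset.mem_range.2 (Nat.lt_succ_of_le (Finset.le_sup (f := id) hi))⟩
  -- `CondIID` constrains an initial segment of indices; pad `A` with `Set.univ` outside `s`.
  have key := h.2.2.2 n (fun k => if (k : ℕ) ∈ s then A k else Set.univ) B
    (fun k => by split_ifs <;> simp [hA]) hB
  convert key using 3 with ω
  · ext ω
    simp only [Set.mem_iInter, Set.mem_preimage, Set.mem_ofPred_eq]
    refine ⟨fun hω k => ?_, fun hω i hi => ?_⟩
    · split_ifs with hk
      exacts [hω k hk, Set.mem_univ _]
    · simpa [hi] using hω ⟨i, Finset.mem_range.1 (hsn hi)⟩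
  · have := h.1 ω
    rw [Fin.prod_univ_eq_prod_range (fun k => ptilde ω (if k ∈ s then A k else Set.univ)) n]
    simp only [apply_ite, measure_univ]
    rw [Finset.prod_ite_mem, Finset.inter_eq_right.2 hsn]

def directing (h : CondIID μ ξ ptilde) (ω : Ω) : ProbabilityMeasure X := ⟨ptilde ω, h.1 ω⟩

@[simp] lemma coe_directing (h : CondIID μ ξ ptilde) (ω : Ω) :
    (h.directing ω : Measure X) = ptilde ω := rfl

lemma measurable_directing (h : CondIID μ ξ ptilde) : Measurable h.directing :=
  h.2.1.subtype_mk

lemma measurable_integral (h : CondIID μ ξ ptilde) {f : X → ℝ} (hf : Measurable f) :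
    Measurable fun ω => ∫ x, f x ∂ptilde ω :=
  (stronglyMeasurable_integral hf.stronglyMeasurable).measurable.comp h.measurable_directing

lemma exists_preimage_directing_eq (h : CondIID μ ξ ptilde) {B : Set (ProbabilityMeasure X)}
    (hB : MeasurableSet B) :
    ∃ B₀ : Set (Measure X), MeasurableSet B₀ ∧ h.directing ⁻¹' B = ptilde ⁻¹' B₀ := by
  obtain ⟨B₀, hB₀, rfl⟩ := hB
  exact ⟨B₀, hB₀, rfl⟩

variable [IsFiniteMeasure μ]

lemma map_directing_prodMk (h : CondIID μ ξ ptilde) (i : ℕ) :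
    μ.map (fun ω => (h.directing ω, ξ i ω)) = μ.map h.directing ⊗ₘ toKernel := by
  have hmeas : Measurable fun ω => (h.directing ω, ξ i ω) :=
    h.measurable_directing.prodMk (h.2.2.1 i)
  refine ext_of_generate_finite _ generateFrom_prod.symm isPiSystem_prod ?_ ?_
  · rintro _ ⟨B, hB : MeasurableSet B, A, hA : MeasurableSet A, rfl⟩
    obtain ⟨B₀, hB₀, hpre⟩ := h.exists_preimage_directing_eq hB
    rw [Measure.map_apply hmeas (hB.prod hA), Measure.compProd_apply_prod hB hA,
      setLIntegral_map hB (toKernel.measurable_coe hA) h.measurable_directing,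
      Set.mk_preimage_prod, hpre, Set.inter_comm]
    simpa using h.measure_biInter_preimage_inter {i} (A := fun _ => A) (fun _ => hA) hB₀
  · simp [Measure.map_apply hmeas MeasurableSet.univ,
      Measure.map_apply h.measurable_directing MeasurableSet.univ]

lemma map_directing_prodMk_prodMk (h : CondIID μ ξ ptilde) {i j : ℕ} (hij : i ≠ j) :
    μ.map (fun ω => (h.directing ω, (ξ i ω, ξ j ω))) =
      μ.map h.directing ⊗ₘ (toKernel ×ₖ toKernel) := by
  have hmeas : Measurable fun ω => (h.directing ω, (ξ i ω, ξ j ω)) :=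
    h.measurable_directing.prodMk ((h.2.2.1 i).prodMk (h.2.2.1 j))
  have hgen := generateFrom_eq_prod (α := ProbabilityMeasure X) (β := X × X)
    MeasurableSpace.generateFrom_measurableSet
    generateFrom_prod isCountablySpanning_measurableSet
    (isCountablySpanning_measurableSet.prod isCountablySpanning_measurableSet)
  refine ext_of_generate_finite _ hgen.symm
    (MeasurableSpace.isPiSystem_measurableSet.prod isPiSystem_prod) ?_ ?_
  · rintro _ ⟨B, hB : MeasurableSet B, _,
      ⟨A₁, hA₁ : MeasurableSet A₁, A₂, hA₂ : MeasurableSet A₂, rfl⟩, rfl⟩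
    obtain ⟨B₀, hB₀, hpre⟩ := h.exists_preimage_directing_eq hB
    rw [Measure.map_apply hmeas (hB.prod (hA₁.prod hA₂)),
      Measure.compProd_apply_prod hB (hA₁.prod hA₂),
      setLIntegral_map hB ((toKernel ×ₖ toKernel).measurable_coe (hA₁.prod hA₂))
        h.measurable_directing, Set.mk_preimage_prod, Set.mk_preimage_prod, hpre,
      Set.inter_comm]
    simp only [Kernel.prod_apply, toKernel_apply, Measure.prod_prod]
    simpa [Set.inter_assoc, Finset.prod_pair hij, hij.symm] using
      h.measure_biInter_preimage_inter {i, j} (A := fun k => if k = i then A₁ else A₂)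
        (fun k => by split_ifs <;> assumption) hB₀
  · simp [Measure.map_apply hmeas MeasurableSet.univ,
      Measure.map_apply h.measurable_directing MeasurableSet.univ]

lemma identDistrib_directing_prodMk (h : CondIID μ ξ ptilde) (i j : ℕ) :
    IdentDistrib (fun ω => (h.directing ω, ξ i ω)) (fun ω => (h.directing ω, ξ j ω)) μ μ where
  aemeasurable_fst := (h.measurable_directing.prodMk (h.2.2.1 i)).aemeasurable
  aemeasurable_snd := (h.measurable_directing.prodMk (h.2.2.1 j)).aemeasurable
  map_eq := by rw [h.map_directing_prodMk, h.map_directing_prodMk]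

lemma lintegral_comp_directing_prodMk (h : CondIID μ ξ ptilde) (i : ℕ)
    {G : ProbabilityMeasure X × X → ℝ≥0∞} (hG : Measurable G) :
    ∫⁻ ω, G (h.directing ω, ξ i ω) ∂μ = ∫⁻ q, ∫⁻ x, G (q, x) ∂q ∂(μ.map h.directing) := by
  rw [← lintegral_map hG (h.measurable_directing.prodMk (h.2.2.1 i)), h.map_directing_prodMk,
    Measure.lintegral_compProd hG]
  rfl

lemma integral_comp_directing_prodMk_prodMk (h : CondIID μ ξ ptilde) {i j : ℕ} (hij : i ≠ j)
    {E : Type*} [NormedAddCommGroup E] [NormedSpace ℝ E]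
    {G : ProbabilityMeasure X × (X × X) → E} (hG : StronglyMeasurable G)
    (hGi : Integrable (fun ω => G (h.directing ω, (ξ i ω, ξ j ω))) μ) :
    ∫ ω, G (h.directing ω, (ξ i ω, ξ j ω)) ∂μ =
      ∫ q, ∫ z, G (q, z) ∂(q : Measure X).prod q ∂(μ.map h.directing) := by
  have hmeas : Measurable fun ω => (h.directing ω, (ξ i ω, ξ j ω)) :=
    h.measurable_directing.prodMk ((h.2.2.1 i).prodMk (h.2.2.1 j))
  rw [← integral_map hmeas.aemeasurable hG.aestronglyMeasurable,
    h.map_directing_prodMk_prodMk hij, Measure.integral_compProd]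
  · simp only [Kernel.prod_apply, toKernel_apply]
  · rwa [← h.map_directing_prodMk_prodMk hij,
      integrable_map_measure hG.aestronglyMeasurable hmeas.aemeasurable]

lemma identDistrib_condCentered (h : CondIID μ ξ ptilde) {f : X → ℝ} (hf : Measurable f)
    (i j : ℕ) : IdentDistrib (condCentered ξ ptilde f i) (condCentered ξ ptilde f j) μ μ :=
  (h.identDistrib_directing_prodMk i j).comp (measurable_sub_integral hf)

lemma lintegral_condCentered_sq_le (h : CondIID μ ξ ptilde) {f : X → ℝ} (hf : Measurable f)
    (i : ℕ) :
    ∫⁻ ω, ‖condCentered ξ ptilde f i ω‖ₑ ^ 2 ∂μ ≤ ∫⁻ ω, ‖f (ξ i ω)‖ₑ ^ 2 ∂μ := by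
  calc ∫⁻ ω, ‖condCentered ξ ptilde f i ω‖ₑ ^ 2 ∂μ
      = ∫⁻ q, ∫⁻ x, ‖f x - ∫ y, f y ∂(q : Measure X)‖ₑ ^ 2 ∂q ∂(μ.map h.directing) :=
        h.lintegral_comp_directing_prodMk i
          (G := fun z => ‖f z.2 - ∫ y, f y ∂(z.1 : Measure X)‖ₑ ^ 2)
          ((measurable_sub_integral hf).enorm.pow_const 2)
    _ ≤ ∫⁻ q, ∫⁻ x, ‖f x‖ₑ ^ 2 ∂q ∂(μ.map h.directing) :=
        lintegral_mono fun q => lintegral_enorm_sub_integral_sq_le hf.aestronglyMeasurable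
    _ = ∫⁻ ω, ‖f (ξ i ω)‖ₑ ^ 2 ∂μ :=
        (h.lintegral_comp_directing_prodMk i (G := fun z => ‖f z.2‖ₑ ^ 2)
          ((hf.comp measurable_snd).enorm.pow_const 2)).symm

lemma integral_condCentered_mul_eq_zero (h : CondIID μ ξ ptilde) {f : X → ℝ} (hf : Measurable f)
    {i j : ℕ} (hij : i ≠ j)
    (hint : Integrable (fun ω => condCentered ξ ptilde f i ω * condCentered ξ ptilde f j ω) μ) :
    ∫ ω, condCentered ξ ptilde f i ω * condCentered ξ ptilde f j ω ∂μ = 0 := by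
  have hG := measurable_sub_integral hf
  refine (h.integral_comp_directing_prodMk_prodMk hij
    (G := fun z => (f z.2.1 - ∫ x, f x ∂z.1) * (f z.2.2 - ∫ x, f x ∂z.1))
    ((hG.comp (measurable_fst.prodMk (measurable_fst.comp measurable_snd))).mul
      (hG.comp (measurable_fst.prodMk (measurable_snd.comp measurable_snd)))).stronglyMeasurable
    hint).trans (integral_eq_zero_of_ae (.of_forall fun q => ?_))
  dsimp only
  rw [Pi.zero_apply, integral_prod_mul (fun x => f x - ∫ y, f y ∂(q : Measure X))
    (fun x => f x - ∫ y, f y ∂(q : Measure X)), integral_sub_integral_eq_zero, zero_mul]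

lemma memLp_condCentered (h : CondIID μ ξ ptilde) {f : X → ℝ} (hf : Measurable f) {i₀ : ℕ}
    (hf2 : MemLp (fun ω => f (ξ i₀ ω)) 2 μ) (i : ℕ) : MemLp (condCentered ξ ptilde f i) 2 μ :=
  (h.identDistrib_condCentered hf i i₀).memLp_iff.2 (integral_sq_le_of_lintegral_enorm_sq_le
    ((hf.comp (h.2.2.1 i₀)).sub (h.measurable_integral hf)).aestronglyMeasurable hf2
    (h.lintegral_condCentered_sq_le hf i₀)).1

lemma integral_condCentered_sq_le (h : CondIID μ ξ ptilde) {f : X → ℝ} (hf : Measurable f)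
    {i : ℕ} (hf2 : MemLp (fun ω => f (ξ i ω)) 2 μ) :
    ∫ ω, condCentered ξ ptilde f i ω ^ 2 ∂μ ≤ ∫ ω, f (ξ i ω) ^ 2 ∂μ :=
  (integral_sq_le_of_lintegral_enorm_sq_le
    ((hf.comp (h.2.2.1 i)).sub (h.measurable_integral hf)).aestronglyMeasurable hf2
    (h.lintegral_condCentered_sq_le hf i)).2

lemma integral_sq_average_condCentered (h : CondIID μ ξ ptilde) {f : X → ℝ} (hf : Measurable f)
    (hY : ∀ i, MemLp (condCentered ξ ptilde f i) 2 μ) (N : ℕ) :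
    ∫ ω, ((1 / N : ℝ) * ∑ i ∈ Finset.range N, condCentered ξ ptilde f i ω) ^ 2 ∂μ =
      (∫ ω, condCentered ξ ptilde f 0 ω ^ 2 ∂μ) / N := by
  have hsum := integral_sq_sum_of_orthogonal hY (v := ∫ ω, condCentered ξ ptilde f 0 ω ^ 2 ∂μ)
    (fun i j hij => h.integral_condCentered_mul_eq_zero hf hij ((hY i).integrable_mul (hY j)))
    (fun i => ((h.identDistrib_condCentered hf i 0).comp (measurable_id.pow_const 2)).integral_eq)
    (Finset.range N)
  simp only [mul_pow, integral_const_mul, hsum, Finset.card_range]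
  rcases eq_or_ne (N : ℝ) 0 with hN | hN
  · simp [hN]
  · field_simp

end CondIID

/-- For an exchangeable sequence directed by `p̃` and `f` with `E f(ξ₁)² < ∞`,
`w₁((1/N)∑ f(ξᵢ), ∫ f dp̃) ≤ N^{-1/2} (E|f(ξ₁) - ∫ f dp̃|²)^{1/2}
  ≤ 2 N^{-1/2} (E f(ξ₁)²)^{1/2}`. -/
theorem stmt10 {Ω : Type*} [MeasurableSpace Ω] (μ : Measure Ω) [IsProbabilityMeasure μ]
    (ξ : ℕ → Ω → ℝ) (ptilde : Ω → Measure ℝ) (h : CondIID μ ξ ptilde)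
    (f : ℝ → ℝ) (hf : Measurable f) (hf2 : Integrable (fun ω => f (ξ 0 ω) ^ 2) μ)
    (N : ℕ) (hN : 0 < N) :
    w1 (μ.map fun ω => (1 / N : ℝ) * ∑ i ∈ Finset.range N, f (ξ i ω))
        (μ.map fun ω => ∫ x, f x ∂ptilde ω) ≤
      (1 / Real.sqrt N) * (∫ ω, |f (ξ 0 ω) - ∫ x, f x ∂ptilde ω| ^ 2 ∂μ) ^ (1/2 : ℝ) ∧
    (1 / Real.sqrt N) * (∫ ω, |f (ξ 0 ω) - ∫ x, f x ∂ptilde ω| ^ 2 ∂μ) ^ (1/2 : ℝ) ≤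
      (2 / Real.sqrt N) * Real.sqrt (∫ ω, f (ξ 0 ω) ^ 2 ∂μ) := by
  have hfξ (i : ℕ) : Measurable fun ω => f (ξ i ω) := hf.comp (h.2.2.1 i)
  have hf2' := (memLp_two_iff_integrable_sq (hfξ 0).aestronglyMeasurable).2 hf2
  have hY := h.memLp_condCentered hf hf2'
  have hdiff (ω : Ω) : (1 / N : ℝ) * ∑ i ∈ Finset.range N, f (ξ i ω) - ∫ x, f x ∂ptilde ω =
      (1 / N : ℝ) * ∑ i ∈ Finset.range N, condCentered ξ ptilde f i ω := by
    simp only [condCentered, Finset.sum_sub_distrib, Finset.sum_const, Finset.card_range,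
      nsmul_eq_mul]
    field_simp
  simp only [sq_abs, ← Real.sqrt_eq_rpow]
  refine ⟨?_, ?_⟩
  · calc _ ≤ _ := w1_map_le_integral_abs_sub
          ((Finset.measurable_sum _ fun i _ => hfξ i).const_mul _) (h.measurable_integral hf)
      _ ≤ _ := integral_abs_le_sqrt_integral_sq_s10
          (by simpa only [hdiff] using (memLp_finsetSum _ fun i _ => hY i).const_mul (1 / N : ℝ))
      _ = _ := by
        simp only [hdiff, h.integral_sq_average_condCentered hf hY,
          Real.sqrt_div' _ (Nat.cast_nonneg N)]
        rw [div_eq_inv_mul, one_div]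
        rfl
  · gcongr ?_ * √?_
    · exact div_le_div_of_nonneg_right one_le_two (Real.sqrt_nonneg _)
    · exact h.integral_condCentered_sq_le hf hf2'
end

section
/- Let Z be distributed as a mixture: P{Z ≤ x} = (1/B(N+1,N+1)) ∫_0^1 t^N(1-t)^N [1 - H_x(t)] dt where H_x(t) = P{F̃(x) ≤ t} for a random distribution function F̃ with E[F̃(x)] = G(x). Then P{Z ≤ x} ≤ G(x)·(2N+1)/N and P{Z > x} ≤ (1 - G(x^-))·(2N+1)/N; consequently if G is a (tight) distribution function on ℝ, the family of laws of Z over N ≥ 1 is uniformly tight. -/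
/-!
By Markov's inequality, the distribution function `H_x` of `F̃(x)` satisfies
`t (1 - H_x(t)) ≤ G(x)` and `(1 - t) H_x(t) ≤ 1 - G(x)`. Averaging against the Beta(N+1, N+1)
weight `t^N (1-t)^N`, one factor `t` (resp. `1 - t`) is absorbed, at the cost of the ratio
`B(N, N+1) / B(N+1, N+1) = (2N+1)/N ≤ 3`.
Both tails of `Z` are thus bounded uniformly in `N` by tails of `3 G`, which gives tightness.
-/

open MeasureTheory intervalIntegral

/-- The Beta recurrence `(a + b + 2) B(a + 2, b + 1) = (a + 1) B(a + 1, b + 1)`, by integrating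
the derivative of `t ^ (a + 1) * (1 - t) ^ (b + 1)`. -/
theorem integral_pow_succ_mul_one_sub_pow (a b : ℕ) :
    ((a : ℝ) + b + 2) * ∫ t in (0 : ℝ)..1, t ^ (a + 1) * (1 - t) ^ b =
      ((a : ℝ) + 1) * ∫ t in (0 : ℝ)..1, t ^ a * (1 - t) ^ b := by
  have hderiv : ∀ t ∈ Set.uIcc (0 : ℝ) 1,
      HasDerivAt (fun t : ℝ => t ^ (a + 1) * (1 - t) ^ (b + 1))
        (((a : ℝ) + 1) * (t ^ a * (1 - t) ^ b) -
          ((a : ℝ) + b + 2) * (t ^ (a + 1) * (1 - t) ^ b)) t := by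
    intro t _
    refine ((hasDerivAt_pow (a + 1) t).fun_mul
      (((hasDerivAt_id t).const_sub 1).fun_pow (b + 1))).congr_deriv ?_
    simp only [Nat.add_sub_cancel, Nat.cast_add, Nat.cast_one, id]
    ring
  have hFTC := integral_eq_sub_of_hasDerivAt hderiv
    (by apply Continuous.intervalIntegrable; fun_prop)
  rw [intervalIntegral.integral_sub (by apply Continuous.intervalIntegrable; fun_prop)
      (by apply Continuous.intervalIntegrable; fun_prop),
    intervalIntegral.integral_const_mul, intervalIntegral.integral_const_mul] at hFTC
  simp only [one_pow, sub_self, ne_eq, Nat.add_eq_zero_iff, one_ne_zero, and_false,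
    not_false_eq_true, zero_pow, mul_zero, sub_zero, mul_one] at hFTC
  linarith

theorem integral_pow_mul_one_sub_pow_pos (a b : ℕ) :
    0 < ∫ t in (0 : ℝ)..1, t ^ a * (1 - t) ^ b :=
  intervalIntegral_pos_of_pos_on (by apply Continuous.intervalIntegrable; fun_prop)
    (fun t ht => mul_pos (pow_pos ht.1 a) (pow_pos (sub_pos.2 ht.2) b)) zero_lt_one

/-- The mean of `h` under the Beta(N+1, N+1) law, the law of the median of `2N+1` independent
uniform samples. -/
noncomputable def betaMean (N : ℕ) (h : ℝ → ℝ) : ℝ :=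
  (∫ t in (0 : ℝ)..1, t ^ N * (1 - t) ^ N * h t) / ∫ t in (0 : ℝ)..1, t ^ N * (1 - t) ^ N

theorem betaMean_one_sub (N : ℕ) {h : ℝ → ℝ} (hh : IntervalIntegrable h volume 0 1) :
    betaMean N (fun t => 1 - h t) = 1 - betaMean N h := by
  have hw : Continuous fun t : ℝ => t ^ N * (1 - t) ^ N := by fun_prop
  have hB := (integral_pow_mul_one_sub_pow_pos N N).ne'
  simp only [betaMean, mul_sub, mul_one]
  rw [intervalIntegral.integral_sub (hw.intervalIntegrable 0 1)
    (hh.continuousOn_mul hw.continuousOn), sub_div, div_self hB]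

theorem betaMean_comp_one_sub (N : ℕ) (h : ℝ → ℝ) :
    betaMean N (fun t => h (1 - t)) = betaMean N h := by
  have hreflect := integral_comp_sub_left (a := (0 : ℝ)) (b := 1)
    (fun t => t ^ N * (1 - t) ^ N * h t) 1
  simp only [sub_sub_cancel, sub_zero, sub_self] at hreflect
  simp only [betaMean, ← hreflect]
  congr 1
  exact integral_congr fun t _ => by ring

theorem betaMean_le {N : ℕ} (hN : 1 ≤ N) {h : ℝ → ℝ} (hh : IntervalIntegrable h volume 0 1)
    {c : ℝ} (hc : ∀ t ∈ Set.Icc (0 : ℝ) 1, t * h t ≤ c) :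
    betaMean N h ≤ c * (2 * N + 1) / N := by
  obtain ⟨M, rfl⟩ := Nat.exists_eq_add_of_le' hN
  have hB := integral_pow_mul_one_sub_pow_pos (M + 1) (M + 1)
  have hratio := integral_pow_succ_mul_one_sub_pow M (M + 1)
  have hbound : (∫ t in (0 : ℝ)..1, t ^ (M + 1) * (1 - t) ^ (M + 1) * h t) ≤
      ∫ t in (0 : ℝ)..1, c * (t ^ M * (1 - t) ^ (M + 1)) := by
    refine integral_mono_on zero_le_one
      (hh.continuousOn_mul (by fun_prop)) (by apply Continuous.intervalIntegrable; fun_prop)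
      fun t ht => ?_
    calc t ^ (M + 1) * (1 - t) ^ (M + 1) * h t
        = t ^ M * (1 - t) ^ (M + 1) * (t * h t) := by ring
      _ ≤ t ^ M * (1 - t) ^ (M + 1) * c := by
          gcongr
          · exact mul_nonneg (pow_nonneg ht.1 _) (pow_nonneg (sub_nonneg.2 ht.2) _)
          · exact hc t ht
      _ = c * (t ^ M * (1 - t) ^ (M + 1)) := mul_comm _ _
  rw [intervalIntegral.integral_const_mul] at hbound
  rw [betaMean, div_le_iff₀ hB]
  push_cast at hratio ⊢
  calc _ ≤ _ := hbound
    _ = _ := by field_simp; linear_combination (-c) * hratio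

section Markov

variable {Ω : Type*} [MeasurableSpace Ω] {μ : Measure Ω} [IsFiniteMeasure μ] {X : Ω → ℝ}

theorem mul_measureReal_lt_le_integral (hX : 0 ≤ᵐ[μ] X) (hXi : Integrable X μ) (t : ℝ) :
    t * μ.real {ω | t < X ω} ≤ ∫ ω, X ω ∂μ := by
  rcases lt_or_ge t 0 with ht | ht
  · exact (mul_nonpos_of_nonpos_of_nonneg ht.le measureReal_nonneg).trans
      (integral_nonneg_of_ae hX)
  calc t * μ.real {ω | t < X ω} ≤ t * μ.real {ω | t ≤ X ω} :=
        mul_le_mul_of_nonneg_left (measureReal_mono fun ω (h : t < X ω) => h.le) ht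
    _ ≤ ∫ ω, X ω ∂μ := mul_meas_ge_le_integral_of_nonneg hX hXi t

theorem one_sub_mul_measureReal_le_le [IsProbabilityMeasure μ] (hX : ∀ᵐ ω ∂μ, X ω ≤ 1)
    (hXi : Integrable X μ) (t : ℝ) :
    (1 - t) * μ.real {ω | X ω ≤ t} ≤ 1 - ∫ ω, X ω ∂μ := by
  have hMarkov := mul_meas_ge_le_integral_of_nonneg (hX.mono fun ω h => sub_nonneg.2 h)
    ((integrable_const 1).sub hXi) (1 - t)
  simpa only [sub_le_sub_iff_left, Pi.sub_apply, integral_sub (integrable_const 1) hXi,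
    MeasureTheory.integral_const, probReal_univ, one_smul] using hMarkov

end Markov

theorem tight_of_tail_bounds {Ω ι : Type*} [MeasurableSpace Ω] {μ : Measure Ω}
    [IsFiniteMeasure μ] {Z : ι → Ω → ℝ} {s : Set ι} {L R : ℝ → ℝ}
    (hL : Filter.Tendsto L Filter.atBot (nhds 0)) (hR : Filter.Tendsto R Filter.atTop (nhds 0))
    (hle : ∀ i ∈ s, ∀ x, μ.real {ω | Z i ω ≤ x} ≤ L x)
    (hgt : ∀ i ∈ s, ∀ x, μ.real {ω | x < Z i ω} ≤ R x) {ε : ℝ} (hε : 0 < ε) :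
    ∃ M : ℝ, 0 < M ∧ ∀ i ∈ s, μ.real {ω | M < |Z i ω|} ≤ ε := by
  obtain ⟨b, hb⟩ := Filter.eventually_atBot.1 (hL.eventually (gt_mem_nhds (half_pos hε)))
  obtain ⟨a, ha⟩ := Filter.eventually_atTop.1 (hR.eventually (gt_mem_nhds (half_pos hε)))
  refine ⟨max (max a (-b)) 1, by positivity, fun i hi => ?_⟩
  set M := max (max a (-b)) 1
  have hsub : {ω | M < |Z i ω|} ⊆ {ω | M < Z i ω} ∪ {ω | Z i ω ≤ -M} := by
    intro ω (hω : M < |Z i ω|)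
    rcases lt_abs.1 hω with h | h
    · exact Or.inl h
    · exact Or.inr (show Z i ω ≤ -M by linarith)
  calc μ.real {ω | M < |Z i ω|} ≤ μ.real {ω | M < Z i ω} + μ.real {ω | Z i ω ≤ -M} :=
        (measureReal_mono hsub).trans (measureReal_union_le _ _)
    _ ≤ R M + L (-M) := add_le_add (hgt i hi M) (hle i hi (-M))
    _ ≤ ε / 2 + ε / 2 := add_le_add (ha M (le_max_of_le_left (le_max_left a (-b)))).le
        (hb (-M) (neg_le.1 (le_max_of_le_left (le_max_right a (-b))))).le
    _ = ε := add_halves ε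

section CDF

variable {Ω : Type*} [MeasurableSpace Ω] {μ : Measure Ω} [IsProbabilityMeasure μ] {X : Ω → ℝ}

theorem monotone_measureReal_le (μ : Measure Ω) [IsFiniteMeasure μ] (X : Ω → ℝ) :
    Monotone fun t => μ.real {ω | X ω ≤ t} :=
  fun _ _ hst => measureReal_mono fun _ h => le_trans h hst

theorem integral_mem_Icc_zero_one (hXm : Measurable X) (hX : ∀ ω, X ω ∈ Set.Icc (0 : ℝ) 1) :
    ∫ ω, X ω ∂μ ∈ Set.Icc (0 : ℝ) 1 :=
  ⟨integral_nonneg fun ω => (hX ω).1,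
    (integral_mono (Integrable.of_mem_Icc 0 1 hXm.aemeasurable (ae_of_all _ hX))
      (integrable_const 1) fun ω => (hX ω).2).trans_eq (by simp)⟩

theorem betaMean_one_sub_cdf_le {N : ℕ} (hN : 1 ≤ N) (hXm : Measurable X)
    (hX : ∀ ω, X ω ∈ Set.Icc (0 : ℝ) 1) :
    betaMean N (fun t => 1 - μ.real {ω | X ω ≤ t}) ≤ (∫ ω, X ω ∂μ) * (2 * N + 1) / N := by
  refine betaMean_le hN
    (intervalIntegrable_const.sub (monotone_measureReal_le μ X).intervalIntegrable) fun t ht => ?_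
  have hcompl : {ω | X ω ≤ t}ᶜ = {ω | t < X ω} := by ext; simp
  rw [← probReal_compl_eq_one_sub (measurableSet_le hXm measurable_const), hcompl]
  exact mul_measureReal_lt_le_integral (ae_of_all _ fun ω => (hX ω).1)
    (Integrable.of_mem_Icc 0 1 hXm.aemeasurable (ae_of_all _ hX)) t

theorem betaMean_cdf_le {N : ℕ} (hN : 1 ≤ N) (hXm : Measurable X)
    (hX : ∀ ω, X ω ∈ Set.Icc (0 : ℝ) 1) :
    betaMean N (fun t => μ.real {ω | X ω ≤ t}) ≤ (1 - ∫ ω, X ω ∂μ) * (2 * N + 1) / N := by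
  rw [← betaMean_comp_one_sub]
  refine betaMean_le hN ((monotone_measureReal_le μ X).comp_antitone
    fun _ _ h => sub_le_sub_left h 1).intervalIntegrable fun t _ => ?_
  simpa using one_sub_mul_measureReal_le_le (ae_of_all _ fun ω => (hX ω).2)
    (Integrable.of_mem_Icc 0 1 hXm.aemeasurable (ae_of_all _ hX)) (1 - t)

end CDF

theorem mul_two_mul_add_one_div_le_mul_three {N : ℕ} (hN : 1 ≤ N) {c : ℝ} (hc : 0 ≤ c) :
    c * (2 * N + 1) / N ≤ c * 3 := by
  have hN' : (1 : ℝ) ≤ N := by exact_mod_cast hN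
  rw [mul_div_assoc]
  refine mul_le_mul_of_nonneg_left ?_ hc
  rw [div_le_iff₀ (by positivity)]
  linarith

theorem stmt12_general {Ω : Type*} [MeasurableSpace Ω] (μ : Measure Ω) [IsProbabilityMeasure μ]
    (Ftilde : Ω → ℝ → ℝ) (G : ℝ → ℝ)
    (hFmeas : ∀ x, Measurable fun ω => Ftilde ω x)
    (hF01 : ∀ ω x, Ftilde ω x ∈ Set.Icc (0 : ℝ) 1)
    (hG : ∀ x, ∫ ω, Ftilde ω x ∂μ = G x)
    (hGmono : Monotone G)
    (hG0 : Filter.Tendsto G Filter.atBot (nhds 0))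
    (hG1 : Filter.Tendsto G Filter.atTop (nhds 1))
    (Z : ℕ → Ω → ℝ) (hZmeas : ∀ N, Measurable (Z N))
    (hZ : ∀ N, 1 ≤ N → ∀ x, (μ {ω | Z N ω ≤ x}).toReal =
      (∫ t in (0:ℝ)..1, t ^ N * (1 - t) ^ N * (1 - (μ {ω | Ftilde ω x ≤ t}).toReal)) /
        (∫ t in (0:ℝ)..1, t ^ N * (1 - t) ^ N)) :
    (∀ N, 1 ≤ N → ∀ x, (μ {ω | Z N ω ≤ x}).toReal ≤ G x * (2 * N + 1) / N) ∧
    (∀ N, 1 ≤ N → ∀ x,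
      (μ {ω | x < Z N ω}).toReal ≤ (1 - Function.leftLim G x) * (2 * N + 1) / N) ∧
    (∀ ε : ℝ, 0 < ε → ∃ M : ℝ, 0 < M ∧ ∀ N, 1 ≤ N →
      (μ {ω | M < |Z N ω|}).toReal ≤ ε) := by
  have hle (N : ℕ) (hN : 1 ≤ N) (x : ℝ) : μ.real {ω | Z N ω ≤ x} ≤ G x * (2 * N + 1) / N :=
    (hZ N hN x).trans_le (hG x ▸ betaMean_one_sub_cdf_le hN (hFmeas x) (hF01 · x))
  have hgt (N : ℕ) (hN : 1 ≤ N) (x : ℝ) :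
      μ.real {ω | x < Z N ω} ≤ (1 - G x) * (2 * N + 1) / N := by
    have hcompl : {ω | x < Z N ω} = {ω | Z N ω ≤ x}ᶜ := by ext; simp
    rw [hcompl, probReal_compl_eq_one_sub (measurableSet_le (hZmeas N) measurable_const),
      measureReal_def, hZ N hN x]
    change 1 - betaMean N (fun t => 1 - μ.real {ω | Ftilde ω x ≤ t}) ≤ _
    rw [betaMean_one_sub N (monotone_measureReal_le μ _).intervalIntegrable, sub_sub_cancel,
      ← hG x]
    exact betaMean_cdf_le hN (hFmeas x) (hF01 · x)
  have hG_mem (x : ℝ) : G x ∈ Set.Icc (0 : ℝ) 1 :=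
    hG x ▸ integral_mem_Icc_zero_one (hFmeas x) (hF01 · x)
  refine ⟨hle, fun N hN x => (hgt N hN x).trans ?_, fun ε hε => ?_⟩
  · gcongr
    exact hGmono.leftLim_le le_rfl
  refine tight_of_tail_bounds (s := {N | 1 ≤ N}) (L := fun x => G x * 3)
    (R := fun x => (1 - G x) * 3) (by simpa using hG0.mul_const 3)
    (by simpa using (hG1.const_sub 1).mul_const 3) (fun N hN x => (hle N hN x).trans ?_)
    (fun N hN x => (hgt N hN x).trans ?_) hε
  · exact mul_two_mul_add_one_div_le_mul_three hN (hG_mem x).1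
  · exact mul_two_mul_add_one_div_le_mul_three hN (sub_nonneg.2 (hG_mem x).2)

/-- Let `Z N` have distribution function
`x ↦ (1/B(N+1,N+1)) ∫_0^1 t^N(1-t)^N [1 - H_x(t)] dt`, where `H_x(t) = P{F̃(x) ≤ t}`
for a random distribution function `F̃` with `E[F̃(x)] = G(x)`.  Then
`P{Z ≤ x} ≤ G(x)(2N+1)/N`, `P{Z > x} ≤ (1 - G(x⁻))(2N+1)/N`, and consequently the
family of laws of `Z N`, `N ≥ 1`, is uniformly tight. -/
theorem stmt12 {Ω : Type*} [MeasurableSpace Ω] (μ : Measure Ω) [IsProbabilityMeasure μ]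
    (Ftilde : Ω → ℝ → ℝ) (G : ℝ → ℝ)
    (hFmeas : ∀ x, Measurable fun ω => Ftilde ω x)
    (hFmono : ∀ ω, Monotone (Ftilde ω))
    (hF01 : ∀ ω x, Ftilde ω x ∈ Set.Icc (0 : ℝ) 1)
    (hG : ∀ x, ∫ ω, Ftilde ω x ∂μ = G x)
    (hGmono : Monotone G)
    (hG0 : Filter.Tendsto G Filter.atBot (nhds 0))
    (hG1 : Filter.Tendsto G Filter.atTop (nhds 1))
    (Z : ℕ → Ω → ℝ) (hZmeas : ∀ N, Measurable (Z N))
    (hZ : ∀ N, 1 ≤ N → ∀ x, (μ {ω | Z N ω ≤ x}).toReal =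
      (∫ t in (0:ℝ)..1, t ^ N * (1 - t) ^ N * (1 - (μ {ω | Ftilde ω x ≤ t}).toReal)) /
        (∫ t in (0:ℝ)..1, t ^ N * (1 - t) ^ N)) :
    (∀ N, 1 ≤ N → ∀ x, (μ {ω | Z N ω ≤ x}).toReal ≤ G x * (2 * N + 1) / N) ∧
    (∀ N, 1 ≤ N → ∀ x,
      (μ {ω | x < Z N ω}).toReal ≤ (1 - Function.leftLim G x) * (2 * N + 1) / N) ∧
    (∀ ε : ℝ, 0 < ε → ∃ M : ℝ, 0 < M ∧ ∀ N, 1 ≤ N →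
      (μ {ω | M < |Z N ω|}).toReal ≤ ε) :=
  stmt12_general μ Ftilde G hFmeas hF01 hG hGmono hG0 hG1 Z hZmeas hZ
end

section
/- Let p̃ be a random probability measure on ℝ whose CDF F̃ almost surely has a unique median, with ∫|x| dp̃ < ∞ a.s., and let (ξ_k) be conditionally i.i.d. given p̃ with law p̃. Then the sample median M_N of ξ_1,...,ξ_{2N+1} converges in distribution to med(p̃) as N → ∞. -/
open MeasureTheory ProbabilityTheory Filter

/-- `M N ω` is the sample median (the `(N+1)`-th order statistic) of
`ξ 0 ω, ..., ξ (2N) ω`. -/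
def IsSampleMedianSeq {Ω : Type*} (ξ : ℕ → Ω → ℝ) (M : ℕ → Ω → ℝ) : Prop :=
  ∀ N ω, N + 1 ≤ ((Finset.range (2 * N + 1)).filter fun i => ξ i ω ≤ M N ω).card ∧
    N + 1 ≤ ((Finset.range (2 * N + 1)).filter fun i => M N ω ≤ ξ i ω).card ∧
    ∃ i ∈ Finset.range (2 * N + 1), ξ i ω = M N ω

/-!
Conditionally on `p̃`, the indicators `1{ξᵢ ≤ q}` are i.i.d. Bernoulli with parameter `F̃(q)`.
The cross moments given by `CondIID` bound the second moment of the centred partial sums by `n`,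
so along `n = k²` the normalized sums are square-summable in `L²` and converge a.s.; monotonicity
of the counts fills the gaps between squares. This is a strong law for the empirical CDF at
every rational. Comparing `∫|x - q| dp̃` with `∫|x - m| dp̃` shows that the unique minimizer `m`
satisfies `F̃(q) > 1/2` for `q > m` and `F̃(q) < 1/2` for `q < m`, and a counting argument then
traps the sample median between any two rationals around `m` for large `N`. So `M_N → med(p̃)`
a.s., and dominated convergence gives convergence in distribution.
-/

open Finset Set
open scoped ENNReal Topology

theorem Set.indicator_one_mem_unitInterval {X : Type*} (A : Set X) (x : X) :
    A.indicator (1 : X → ℝ) x ∈ unitInterval := by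
  by_cases hx : x ∈ A <;> simp [hx]

theorem ae_tendsto_zero_of_summable_integral_sq {Ω : Type*} [MeasurableSpace Ω] {μ : Measure Ω}
    {Z : ℕ → Ω → ℝ} (hZ : ∀ k, Integrable (fun ω => Z k ω ^ 2) μ)
    (hsum : Summable fun k => ∫ ω, Z k ω ^ 2 ∂μ) :
    ∀ᵐ ω ∂μ, Tendsto (fun k => Z k ω) atTop (𝓝 0) := by
  have hmeas : ∀ k, AEMeasurable (fun ω => ENNReal.ofReal (Z k ω ^ 2)) μ :=
    fun k => (hZ k).aemeasurable.ennreal_ofReal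
  have hlint : ∀ k, ∫⁻ ω, ENNReal.ofReal (Z k ω ^ 2) ∂μ = ENNReal.ofReal (∫ ω, Z k ω ^ 2 ∂μ) :=
    fun k => (ofReal_integral_eq_lintegral_ofReal (hZ k) (ae_of_all _ fun ω => sq_nonneg _)).symm
  have hfin : ∫⁻ ω, ∑' k, ENNReal.ofReal (Z k ω ^ 2) ∂μ ≠ ∞ := by
    rw [lintegral_tsum hmeas, tsum_congr hlint,
      ← ENNReal.ofReal_tsum_of_nonneg (fun k => integral_nonneg fun ω => sq_nonneg _) hsum]
    exact ENNReal.ofReal_ne_top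
  filter_upwards [ae_lt_top' (AEMeasurable.tsum hmeas) hfin] with ω hω
  have hsq : Tendsto (fun k => Z k ω ^ 2) atTop (𝓝 0) := by
    have := (ENNReal.tendsto_toReal ENNReal.zero_ne_top).comp
      (ENNReal.tendsto_atTop_zero_of_tsum_ne_top hω.ne)
    simpa [Function.comp_def, ENNReal.toReal_ofReal (sq_nonneg _)] using this
  refine (tendsto_zero_iff_abs_tendsto_zero _).2 ?_
  simpa [Function.comp_def, Real.sqrt_sq_eq_abs] using hsq.sqrt

theorem tendsto_succ_sq_div_sq :
    Tendsto (fun k : ℕ => ((k : ℝ) + 1) ^ 2 / (k : ℝ) ^ 2) atTop (𝓝 1) := by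
  have := ((tendsto_const_nhds (x := (1 : ℝ))).add tendsto_one_div_atTop_nhds_zero_nat).pow 2
  rw [add_zero, one_pow] at this
  refine this.congr' ?_
  filter_upwards [eventually_ne_atTop 0] with k hk
  field_simp

namespace CondIID

variable {Ω X : Type*} [MeasurableSpace Ω] [MeasurableSpace X] {μ : Measure Ω}
  {ξ : ℕ → Ω → X} {ptilde : Ω → Measure X}

theorem measurable_measure_apply (h : CondIID μ ξ ptilde) {A : Set X} (hA : MeasurableSet A) :
    Measurable fun ω => ptilde ω A :=
  (Measure.measurable_coe hA).comp h.2.1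

theorem measurable_measureReal (h : CondIID μ ξ ptilde) {A : Set X} (hA : MeasurableSet A) :
    Measurable fun ω => (ptilde ω).real A :=
  (h.measurable_measure_apply hA).ennreal_toReal

theorem measurable_indicator (h : CondIID μ ξ ptilde) {A : Set X} (hA : MeasurableSet A)
    (i : ℕ) : Measurable fun ω => A.indicator (1 : X → ℝ) (ξ i ω) :=
  (measurable_one.indicator hA).comp (h.2.2.1 i)

theorem measureReal_mem_unitInterval (h : CondIID μ ξ ptilde) (A : Set X) (ω : Ω) :
    (ptilde ω).real A ∈ unitInterval :=
  have := h.1 ω; ⟨measureReal_nonneg, measureReal_le_one⟩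

theorem abs_indicator_sub_measureReal_le_one (h : CondIID μ ξ ptilde) (A : Set X) (i : ℕ)
    (ω : Ω) : |A.indicator 1 (ξ i ω) - (ptilde ω).real A| ≤ 1 :=
  abs_sub_le_of_nonneg_of_le (A.indicator_one_mem_unitInterval _).1
    (A.indicator_one_mem_unitInterval _).2 (h.measureReal_mem_unitInterval A ω).1
    (h.measureReal_mem_unitInterval A ω).2

theorem setLIntegral_forall_mem (h : CondIID μ ξ ptilde) {n : ℕ} {A : Fin n → Set X}
    (hA : ∀ i, MeasurableSet (A i)) {f : Measure X → ℝ≥0∞} (hf : Measurable f) :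
    ∫⁻ ω in {ω | ∀ i : Fin n, ξ i ω ∈ A i}, f (ptilde ω) ∂μ =
      ∫⁻ ω, f (ptilde ω) * ∏ i, ptilde ω (A i) ∂μ := by
  obtain ⟨-, hp, -, hlaw⟩ := h
  have hprod : Measurable fun p : Measure X => ∏ i, p (A i) :=
    Finset.measurable_prod _ fun i _ => Measure.measurable_coe (hA i)
  have hmap : (μ.restrict {ω | ∀ i : Fin n, ξ i ω ∈ A i}).map ptilde =
      (μ.map ptilde).withDensity fun p => ∏ i, p (A i) := by
    ext B hB
    rw [Measure.map_apply hp hB, Measure.restrict_apply (hp hB), Set.inter_comm,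
      hlaw n A B hA hB, withDensity_apply _ hB, ← setLIntegral_map hB hprod hp]
  rw [← lintegral_map hf hp, hmap, lintegral_withDensity_eq_lintegral_mul _ hprod hf,
    lintegral_map (hprod.mul hf) hp]
  simp only [Pi.mul_apply, mul_comm]

theorem lintegral_prod_indicator_mul (h : CondIID μ ξ ptilde) (S : Finset ℕ) {A : Set X}
    (hA : MeasurableSet A) {f : Measure X → ℝ≥0∞} (hf : Measurable f) :
    ∫⁻ ω, (∏ i ∈ S, A.indicator 1 (ξ i ω)) * f (ptilde ω) ∂μ =
      ∫⁻ ω, f (ptilde ω) * ptilde ω A ^ #S ∂μ := by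
  classical
  set n := S.sup id + 1
  have hSn : S ⊆ range n := fun i hi => mem_range.2 (Nat.lt_succ_of_le (le_sup (f := id) hi))
  set A' : Fin n → Set X := fun k => if (k : ℕ) ∈ S then A else univ
  have hA' : ∀ k, MeasurableSet (A' k) := fun k => by
    simp only [A']; split_ifs <;> simp [hA]
  have hevent : {ω | ∀ k : Fin n, ξ k ω ∈ A' k} = {ω | ∀ i ∈ S, ξ i ω ∈ A} := by
    ext ω
    simp only [A', mem_ofPred_eq]
    refine ⟨fun hω i hi => ?_, fun hω k => ?_⟩
    · simpa [hi] using hω ⟨i, mem_range.1 (hSn hi)⟩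
    · split_ifs with hk
      exacts [hω k hk, mem_univ _]
  have hmeas : MeasurableSet {ω | ∀ i ∈ S, ξ i ω ∈ A} := by
    simp only [ofPred_forall]
    exact MeasurableSet.biInter S.countable_toSet fun i _ => h.2.2.1 i hA
  have hprod : ∀ ω, ∏ k, ptilde ω (A' k) = ptilde ω A ^ #S := fun ω => by
    have := h.1 ω
    rw [Fin.prod_univ_eq_prod_range (fun k => ptilde ω (if k ∈ S then A else univ))]
    simp only [apply_ite (ptilde ω), measure_univ]
    rw [prod_ite_mem, Finset.inter_eq_right.2 hSn, prod_const]
  have hind : ∀ ω, ∏ i ∈ S, A.indicator 1 (ξ i ω) =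
      {ω | ∀ i ∈ S, ξ i ω ∈ A}.indicator (1 : Ω → ℝ≥0∞) ω := fun ω => by
    by_cases hω : ∀ i ∈ S, ξ i ω ∈ A
    · rw [indicator_of_mem (show ω ∈ {ω | ∀ i ∈ S, ξ i ω ∈ A} from hω), Pi.one_apply]
      exact prod_eq_one fun i hi => by simp [hω i hi]
    · obtain ⟨i, hi, hiA⟩ := by simpa using hω
      rw [indicator_of_notMem (by simpa using hω)]
      exact prod_eq_zero hi (by simp [hiA])
  simp_rw [hind, ← hprod, ← h.setLIntegral_forall_mem hA' hf, hevent]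
  rw [← lintegral_indicator hmeas]
  congr with ω
  by_cases hω : ω ∈ {ω | ∀ i ∈ S, ξ i ω ∈ A} <;> simp [hω]

theorem integral_prod_indicator_mul_pow (h : CondIID μ ξ ptilde) (S : Finset ℕ) {A : Set X}
    (hA : MeasurableSet A) (j : ℕ) :
    ∫ ω, (∏ i ∈ S, A.indicator 1 (ξ i ω)) * (ptilde ω).real A ^ j ∂μ =
      ∫ ω, (ptilde ω).real A ^ (#S + j) ∂μ := by
  have hP := h.measurable_measure_apply hA
  have hP_lt : ∀ ω, ptilde ω A < ∞ := fun ω => by have := h.1 ω; exact measure_lt_top _ _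
  have hlhs : Measurable fun ω => (∏ i ∈ S, A.indicator (1 : X → ℝ≥0∞) (ξ i ω)) * ptilde ω A ^ j :=
    (Finset.measurable_prod _ fun i _ => (measurable_one.indicator hA).comp (h.2.2.1 i)).mul
      (hP.pow_const j)
  have hlhs_lt : ∀ ω, (∏ i ∈ S, A.indicator (1 : X → ℝ≥0∞) (ξ i ω)) * ptilde ω A ^ j < ∞ :=
    fun ω => ENNReal.mul_lt_top (ENNReal.prod_lt_top fun i _ => by
      by_cases hi : ξ i ω ∈ A <;> simp [hi]) (ENNReal.pow_lt_top (hP_lt ω))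
  have hmoment := h.lintegral_prod_indicator_mul S hA ((Measure.measurable_coe hA).pow_const j)
  simp only [← pow_add, add_comm j] at hmoment
  calc ∫ ω, (∏ i ∈ S, A.indicator 1 (ξ i ω)) * (ptilde ω).real A ^ j ∂μ
      = ∫ ω, ((∏ i ∈ S, A.indicator (1 : X → ℝ≥0∞) (ξ i ω)) * ptilde ω A ^ j).toReal ∂μ := by
        congr with ω
        rw [ENNReal.toReal_mul, ENNReal.toReal_prod, ENNReal.toReal_pow]
        congr 1
        refine prod_congr rfl fun i _ => ?_
        by_cases hi : ξ i ω ∈ A <;> simp [hi]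
    _ = ∫ ω, (ptilde ω A ^ (#S + j)).toReal ∂μ := by
        rw [integral_toReal hlhs.aemeasurable (ae_of_all _ hlhs_lt),
          integral_toReal (hP.pow_const _).aemeasurable
            (ae_of_all _ fun ω => ENNReal.pow_lt_top (hP_lt ω)), hmoment]
    _ = ∫ ω, (ptilde ω).real A ^ (#S + j) ∂μ := by simp [Measure.real]

theorem integrable_prod_indicator_mul_pow [IsFiniteMeasure μ] (h : CondIID μ ξ ptilde)
    (S : Finset ℕ) {A : Set X} (hA : MeasurableSet A) (j : ℕ) :
    Integrable (fun ω => (∏ i ∈ S, A.indicator 1 (ξ i ω)) * (ptilde ω).real A ^ j) μ := by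
  have hmeas := (Finset.measurable_prod S fun i _ => h.measurable_indicator hA i).mul
    ((h.measurable_measureReal hA).pow_const j)
  refine Integrable.of_bound hmeas.aestronglyMeasurable 1 (ae_of_all _ fun ω => ?_)
  have hmem := unitInterval.mul_mem
    (unitInterval.prod_mem (t := S) fun i _ => A.indicator_one_mem_unitInterval (ξ i ω))
    (pow_mem (S := unitInterval.submonoid) (h.measureReal_mem_unitInterval A ω) j)
  rw [Real.norm_of_nonneg hmem.1]
  exact hmem.2

theorem integral_indicator_sub_mul_indicator_sub [IsFiniteMeasure μ] (h : CondIID μ ξ ptilde)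
    {A : Set X} (hA : MeasurableSet A) {i j : ℕ} (hij : i ≠ j) :
    ∫ ω, (A.indicator 1 (ξ i ω) - (ptilde ω).real A) *
      (A.indicator 1 (ξ j ω) - (ptilde ω).real A) ∂μ = 0 := by
  set m : Finset ℕ → ℕ → Ω → ℝ :=
    fun S k ω => (∏ i ∈ S, A.indicator 1 (ξ i ω)) * (ptilde ω).real A ^ k
  have hm : ∀ S k, Integrable (m S k) μ := fun S k => h.integrable_prod_indicator_mul_pow S hA k
  have hexpand : (fun ω => (A.indicator 1 (ξ i ω) - (ptilde ω).real A) *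
      (A.indicator 1 (ξ j ω) - (ptilde ω).real A)) =
      m {i, j} 0 - m {i} 1 - m {j} 1 + m ∅ 2 := funext fun ω => by
    simp only [m, Pi.add_apply, Pi.sub_apply, prod_pair hij, Finset.prod_singleton,
      Finset.prod_empty]
    ring
  rw [hexpand]
  rw [integral_add' (((hm _ _).sub (hm _ _)).sub (hm _ _)) (hm _ _),
    integral_sub' ((hm _ _).sub (hm _ _)) (hm _ _), integral_sub' (hm _ _) (hm _ _)]
  simp only [m, h.integral_prod_indicator_mul_pow _ hA, card_pair hij, Finset.card_singleton,
    Finset.card_empty]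
  ring

theorem integrable_indicator_sub_mul_indicator_sub [IsFiniteMeasure μ] (h : CondIID μ ξ ptilde)
    {A : Set X} (hA : MeasurableSet A) (i j : ℕ) :
    Integrable (fun ω => (A.indicator 1 (ξ i ω) - (ptilde ω).real A) *
      (A.indicator 1 (ξ j ω) - (ptilde ω).real A)) μ := by
  refine Integrable.of_bound (((h.measurable_indicator hA i).sub
    (h.measurable_measureReal hA)).mul ((h.measurable_indicator hA j).sub
      (h.measurable_measureReal hA))).aestronglyMeasurable 1 (ae_of_all _ fun ω => ?_)
  rw [norm_mul]
  exact mul_le_one₀ (h.abs_indicator_sub_measureReal_le_one A i ω) (norm_nonneg _)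
    (h.abs_indicator_sub_measureReal_le_one A j ω)

theorem integrable_sq_sum_indicator_sub [IsFiniteMeasure μ] (h : CondIID μ ξ ptilde)
    {A : Set X} (hA : MeasurableSet A) (n : ℕ) :
    Integrable (fun ω => (∑ i ∈ range n, (A.indicator 1 (ξ i ω) - (ptilde ω).real A)) ^ 2) μ := by
  simp_rw [sq, sum_mul_sum]
  exact integrable_finsetSum _ fun i _ => integrable_finsetSum _ fun j _ =>
    h.integrable_indicator_sub_mul_indicator_sub hA i j

theorem integral_sq_sum_indicator_sub_le [IsProbabilityMeasure μ] (h : CondIID μ ξ ptilde)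
    {A : Set X} (hA : MeasurableSet A) (n : ℕ) :
    ∫ ω, (∑ i ∈ range n, (A.indicator 1 (ξ i ω) - (ptilde ω).real A)) ^ 2 ∂μ ≤ n := by
  set Y : ℕ → Ω → ℝ := fun i ω => A.indicator 1 (ξ i ω) - (ptilde ω).real A
  have hYY : ∀ i j, Integrable (fun ω => Y i ω * Y j ω) μ :=
    h.integrable_indicator_sub_mul_indicator_sub hA
  have hdiag : ∀ i, ∫ ω, Y i ω * Y i ω ∂μ ≤ 1 := fun i => by
    calc ∫ ω, Y i ω * Y i ω ∂μ ≤ ∫ _, (1 : ℝ) ∂μ :=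
          integral_mono (hYY i i) (integrable_const 1) fun ω => by
            rw [← abs_mul_abs_self]
            exact mul_le_one₀ (h.abs_indicator_sub_measureReal_le_one A i ω) (abs_nonneg _)
              (h.abs_indicator_sub_measureReal_le_one A i ω)
      _ = 1 := by simp
  calc ∫ ω, (∑ i ∈ range n, Y i ω) ^ 2 ∂μ
      = ∑ i ∈ range n, ∑ j ∈ range n, ∫ ω, Y i ω * Y j ω ∂μ := by
        simp_rw [sq, sum_mul_sum]
        rw [integral_finsetSum _ fun i _ => integrable_finsetSum _ fun j _ => hYY i j]
        exact sum_congr rfl fun i _ => integral_finsetSum _ fun j _ => hYY i j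
    _ = ∑ i ∈ range n, ∫ ω, Y i ω * Y i ω ∂μ := sum_congr rfl fun i hi =>
        sum_eq_single_of_mem i hi fun j _ hji =>
          h.integral_indicator_sub_mul_indicator_sub hA (Ne.symm hji)
    _ ≤ ∑ _i ∈ range n, (1 : ℝ) := sum_le_sum fun i _ => hdiag i
    _ = n := by simp

theorem ae_tendsto_sum_indicator_sub_div_sq [IsProbabilityMeasure μ] (h : CondIID μ ξ ptilde)
    {A : Set X} (hA : MeasurableSet A) :
    ∀ᵐ ω ∂μ, Tendsto (fun k : ℕ =>
      (∑ i ∈ range (k ^ 2), (A.indicator 1 (ξ i ω) - (ptilde ω).real A)) / (k : ℝ) ^ 2)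
      atTop (𝓝 0) := by
  refine ae_tendsto_zero_of_summable_integral_sq (fun k => ?_) ?_
  · simp_rw [div_pow]
    exact (h.integrable_sq_sum_indicator_sub hA _).div_const _
  refine (Real.summable_one_div_nat_pow.2 one_lt_two).of_nonneg_of_le
    (fun k => integral_nonneg fun ω => sq_nonneg _) fun k => ?_
  have hvar := h.integral_sq_sum_indicator_sub_le hA (k ^ 2)
  simp_rw [div_pow, integral_div]
  calc (∫ ω, (∑ i ∈ range (k ^ 2), (A.indicator 1 (ξ i ω) - (ptilde ω).real A)) ^ 2 ∂μ) /
        ((k : ℝ) ^ 2) ^ 2 ≤ (k : ℝ) ^ 2 / ((k : ℝ) ^ 2) ^ 2 := by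
        gcongr; exact_mod_cast hvar
    _ = 1 / (k : ℝ) ^ 2 := by
        rcases eq_or_ne (k : ℝ) 0 with hk | hk
        · simp [hk]
        · field_simp

theorem ae_tendsto_sum_indicator_div [IsProbabilityMeasure μ] (h : CondIID μ ξ ptilde)
    {A : Set X} (hA : MeasurableSet A) :
    ∀ᵐ ω ∂μ, Tendsto (fun n : ℕ => (∑ i ∈ range n, A.indicator (1 : X → ℝ) (ξ i ω)) / n)
      atTop (𝓝 ((ptilde ω).real A)) := by
  filter_upwards [h.ae_tendsto_sum_indicator_sub_div_sq hA] with ω hω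
  refine tendsto_div_of_monotone_of_exists_subseq_tendsto_div _ _
    (monotone_nat_of_le_succ fun n => ?_) fun a ha => ⟨fun k => k ^ 2, ?_,
      tendsto_pow_atTop two_ne_zero, ?_⟩
  · rw [sum_range_succ]
    linarith [(A.indicator_one_mem_unitInterval (ξ n ω)).1]
  · filter_upwards [tendsto_succ_sq_div_sq.eventually (gt_mem_nhds ha), eventually_ne_atTop 0]
      with k hlt hk
    push_cast
    rw [div_lt_iff₀ (by positivity)] at hlt
    exact hlt.le
  · rw [← zero_add ((ptilde ω).real A)]
    refine (hω.add_const ((ptilde ω).real A)).congr' ?_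
    filter_upwards [eventually_ne_atTop 0] with k hk
    rw [sum_sub_distrib, sum_const, card_range, nsmul_eq_mul]
    push_cast
    field_simp
    ring

end CondIID

theorem abs_sub_le_abs_sub_add_mul_indicator (x m q : ℝ) :
    |x - q| ≤ |x - m| + (q - m) * (2 * (Iic q).indicator 1 x - 1) := by
  simp only [indicator_apply, Set.mem_Iic, Pi.one_apply]
  split_ifs <;> cases abs_cases (x - q) <;> cases abs_cases (x - m) <;> linarith

theorem integral_abs_sub_le {p : Measure ℝ} [IsProbabilityMeasure p]
    (hint : Integrable (fun x => |x|) p) (m q : ℝ) :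
    ∫ x, |x - q| ∂p ≤ ∫ x, |x - m| ∂p + (q - m) * (2 * p.real (Iic q) - 1) := by
  have hid : Integrable id p :=
    (integrable_norm_iff aestronglyMeasurable_id).1 (by simpa [Real.norm_eq_abs] using hint)
  have habs : ∀ θ, Integrable (fun x => |x - θ|) p := fun θ => (hid.sub (integrable_const θ)).abs
  have hind : Integrable ((Iic q).indicator (1 : ℝ → ℝ)) p :=
    (integrable_const 1).indicator measurableSet_Iic
  have hcorr : Integrable (fun x => (q - m) * (2 * (Iic q).indicator 1 x - 1)) p :=
    ((hind.const_mul 2).sub (integrable_const 1)).const_mul _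
  calc ∫ x, |x - q| ∂p ≤ ∫ x, |x - m| + (q - m) * (2 * (Iic q).indicator 1 x - 1) ∂p :=
        integral_mono (habs q) ((habs m).add hcorr)
          fun x => abs_sub_le_abs_sub_add_mul_indicator x m q
    _ = ∫ x, |x - m| ∂p + (q - m) * (2 * p.real (Iic q) - 1) := by
        rw [integral_add (habs m) hcorr, integral_const_mul,
          integral_sub (hind.const_mul 2) (integrable_const 1), integral_const_mul,
          integral_indicator_one measurableSet_Iic]
        simp

theorem measureReal_Iic_lt_half_lt_of_unique_minimizer {p : Measure ℝ} [IsProbabilityMeasure p]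
    (hint : Integrable (fun x => |x|) p) {m : ℝ}
    (hmin : ∀ θ, ∫ x, |x - m| ∂p ≤ ∫ x, |x - θ| ∂p)
    (huniq : ∀ m', (∀ θ, ∫ x, |x - m'| ∂p ≤ ∫ x, |x - θ| ∂p) → m' = m) :
    (∀ q, m < q → 1 / 2 < p.real (Iic q)) ∧ (∀ q, q < m → p.real (Iic q) < 1 / 2) := by
  have hpos : ∀ q, q ≠ m → 0 < (q - m) * (2 * p.real (Iic q) - 1) := fun q hqm => by
    have hstrict : ∫ x, |x - m| ∂p < ∫ x, |x - q| ∂p :=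
      (hmin q).lt_of_ne fun heq => hqm (huniq q fun θ => heq ▸ hmin θ)
    linarith [integral_abs_sub_le hint m q]
  refine ⟨fun q hq => ?_, fun q hq => ?_⟩
  · have := hpos q hq.ne'
    nlinarith
  · have := hpos q hq.ne
    nlinarith

theorem le_of_half_lt_card_filter_le {x : ℕ → ℝ} {N : ℕ} {a q : ℝ}
    (hge : N + 1 ≤ #{i ∈ range (2 * N + 1) | a ≤ x i})
    (hcard : 2 * N + 1 < 2 * #{i ∈ range (2 * N + 1) | x i ≤ q}) : a ≤ q := by
  have hlt : #(range (2 * N + 1)) <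
      #{i ∈ range (2 * N + 1) | x i ≤ q} + #{i ∈ range (2 * N + 1) | a ≤ x i} := by
    rw [card_range]
    omega
  obtain ⟨i, hi⟩ := inter_nonempty_of_card_lt_card_add_card (filter_subset _ _)
    (filter_subset _ _) hlt
  simp only [Finset.mem_inter, mem_filter] at hi
  linarith [hi.1.2, hi.2.2]

theorem lt_of_card_filter_le_lt_half {x : ℕ → ℝ} {N : ℕ} {a q : ℝ}
    (hle : N + 1 ≤ #{i ∈ range (2 * N + 1) | x i ≤ a})
    (hcard : 2 * #{i ∈ range (2 * N + 1) | x i ≤ q} < 2 * N + 1) : q < a := by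
  have hsplit := card_filter_add_card_filter_not (s := range (2 * N + 1)) fun i => x i ≤ q
  have hlt : #(range (2 * N + 1)) <
      #{i ∈ range (2 * N + 1) | x i ≤ a} + #{i ∈ range (2 * N + 1) | ¬ x i ≤ q} := by
    rw [card_range] at hsplit ⊢
    omega
  obtain ⟨i, hi⟩ := inter_nonempty_of_card_lt_card_add_card (filter_subset _ _)
    (filter_subset _ _) hlt
  simp only [Finset.mem_inter, mem_filter, not_le] at hi
  linarith [hi.1.2, hi.2.2]

theorem tendsto_sampleMedian_of_tendsto_empiricalCDF (x M : ℕ → ℝ) {m : ℝ} {F : ℝ → ℝ}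
    (hle : ∀ N, N + 1 ≤ #{i ∈ range (2 * N + 1) | x i ≤ M N})
    (hge : ∀ N, N + 1 ≤ #{i ∈ range (2 * N + 1) | M N ≤ x i})
    (hfreq : ∀ q : ℚ, Tendsto (fun n : ℕ => (#{i ∈ range n | x i ≤ q} : ℝ) / n) atTop (𝓝 (F q)))
    (hup : ∀ q, m < q → 1 / 2 < F q) (hdown : ∀ q, q < m → F q < 1 / 2) :
    Tendsto M atTop (𝓝 m) := by
  have hodd : Tendsto (fun N : ℕ => 2 * N + 1) atTop atTop :=
    tendsto_atTop_mono (fun N => show N ≤ 2 * N + 1 by omega) tendsto_id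
  refine tendsto_order.2 ⟨fun a ha => ?_, fun b hb => ?_⟩
  · obtain ⟨q, haq, hqm⟩ := exists_rat_btwn ha
    filter_upwards [((hfreq q).comp hodd).eventually (gt_mem_nhds (hdown q hqm))] with N hN
    rw [Function.comp_apply, div_lt_iff₀ (by positivity)] at hN
    push_cast at hN
    refine haq.trans (lt_of_card_filter_le_lt_half (hle N) ?_)
    rify
    linarith
  · obtain ⟨q, hmq, hqb⟩ := exists_rat_btwn hb
    filter_upwards [((hfreq q).comp hodd).eventually (lt_mem_nhds (hup q hmq))] with N hN
    rw [Function.comp_apply, lt_div_iff₀ (by positivity)] at hN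
    push_cast at hN
    refine (le_of_half_lt_card_filter_le (hge N) ?_).trans_lt hqb
    rify
    linarith

theorem stmt13_general {Ω : Type*} [MeasurableSpace Ω] (μ : Measure Ω) [IsProbabilityMeasure μ]
    (ξ : ℕ → Ω → ℝ) (ptilde : Ω → Measure ℝ) (h : CondIID μ ξ ptilde)
    (hint : ∀ᵐ ω ∂μ, Integrable (fun x => |x|) (ptilde ω))
    (med : Ω → ℝ)
    (hmed : ∀ᵐ ω ∂μ,
      (∀ θ : ℝ, ∫ x, |x - med ω| ∂ptilde ω ≤ ∫ x, |x - θ| ∂ptilde ω) ∧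
      (∀ m' : ℝ, (∀ θ : ℝ, ∫ x, |x - m'| ∂ptilde ω ≤ ∫ x, |x - θ| ∂ptilde ω) →
        m' = med ω))
    (M : ℕ → Ω → ℝ) (hMmeas : ∀ N, Measurable (M N)) (hM : IsSampleMedianSeq ξ M) :
    ∀ g : BoundedContinuousFunction ℝ ℝ,
      Tendsto (fun N : ℕ => ∫ ω, g (M N ω) ∂μ) atTop (nhds (∫ ω, g (med ω) ∂μ)) := by
  intro g
  have hfreq := ae_all_iff.2 fun q : ℚ =>
    h.ae_tendsto_sum_indicator_div (measurableSet_Iic (a := (q : ℝ)))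
  have hconv : ∀ᵐ ω ∂μ, Tendsto (M · ω) atTop (𝓝 (med ω)) := by
    filter_upwards [hint, hmed, hfreq] with ω hintω hmedω hfreqω
    have := h.1 ω
    obtain ⟨hup, hdown⟩ :=
      measureReal_Iic_lt_half_lt_of_unique_minimizer hintω hmedω.1 hmedω.2
    refine tendsto_sampleMedian_of_tendsto_empiricalCDF (ξ · ω) (M · ω) (fun N => (hM N ω).1)
      (fun N => (hM N ω).2.1) (fun q => ?_) hup hdown
    simpa [indicator_apply] using hfreqω q
  exact tendsto_integral_of_dominated_convergence (fun _ => ‖g‖)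
    (fun N => (g.continuous.measurable.comp (hMmeas N)).aestronglyMeasurable)
    (integrable_const _) (fun N => ae_of_all _ fun ω => g.norm_coe_le_norm _)
    (hconv.mono fun ω hω => (g.continuous.tendsto _).comp hω)

/-- If `p̃` has a.s. a unique median (the unique minimizer of `θ ↦ ∫|x-θ| dp̃`) and
`∫|x| dp̃ < ∞` a.s., then the sample median `M_N` of `ξ₁,...,ξ_{2N+1}` converges in
distribution to `med(p̃)`. -/
theorem stmt13 {Ω : Type*} [MeasurableSpace Ω] (μ : Measure Ω) [IsProbabilityMeasure μ]
    (ξ : ℕ → Ω → ℝ) (ptilde : Ω → Measure ℝ) (h : CondIID μ ξ ptilde)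
    (hint : ∀ᵐ ω ∂μ, Integrable (fun x => |x|) (ptilde ω))
    (med : Ω → ℝ) (hmedmeas : Measurable med)
    (hmed : ∀ᵐ ω ∂μ,
      (∀ θ : ℝ, ∫ x, |x - med ω| ∂ptilde ω ≤ ∫ x, |x - θ| ∂ptilde ω) ∧
      (∀ m' : ℝ, (∀ θ : ℝ, ∫ x, |x - m'| ∂ptilde ω ≤ ∫ x, |x - θ| ∂ptilde ω) →
        m' = med ω))
    (M : ℕ → Ω → ℝ) (hMmeas : ∀ N, Measurable (M N)) (hM : IsSampleMedianSeq ξ M) :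
    ∀ g : BoundedContinuousFunction ℝ ℝ,
      Tendsto (fun N : ℕ => ∫ ω, g (M N ω) ∂μ) atTop (nhds (∫ ω, g (med ω) ∂μ)) :=
  stmt13_general μ ξ ptilde h hint med hmed M hMmeas hM
end
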